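/- arXiv:1403.2289 — 8 statements merged into one kernel-verified Lean document; each statement's English description precedes it below -/
import Mathlib

section
/- If G is a po-group and u ∈ G with u > 0, then the interval Γ(G,u) = {g ∈ G : 0 ≤ g ≤ u}, with partial addition a + b defined iff a + b ∈ [0,u] (using the group addition), with constants 0 and u, is a pseudo effect algebra, and in it a⁻ = u − a and a∼ = −a + u. -/
open scoped Classical

/-- A generalized pseudo effect algebra (GPEA): a partial algebra `(E; +, 0)`
satisfying (GP1)-(GP5). The partial addition is modelled by an `Option`-valued
operation: `add a b = some c` means `a + b` is defined and equals `c`. -/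
structure GPEA (E : Type) where
  add : E → E → Option E
  zero : E
  assoc_ex : ∀ a b c : E,
    (∃ ab, add a b = some ab ∧ (add ab c).isSome) ↔
    (∃ bc, add b c = some bc ∧ (add a bc).isSome)
  assoc_eq : ∀ a b c ab bc : E, add a b = some ab → add b c = some bc →
    add ab c = add a bc
  exch : ∀ a b ab : E, add a b = some ab →
    (∃ d, add d a = some ab) ∧ (∃ e, add b e = some ab)
  cancel_left : ∀ a b c x : E, add a b = some x → add a c = some x → b = c
  cancel_right : ∀ a b c x : E, add b a = some x → add c a = some x → b = c
  pos : ∀ a b : E, add a b = some zero → a = zero ∧ b = zero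
  add_zero : ∀ a : E, add a zero = some a
  zero_add : ∀ a : E, add zero a = some a

/-- The induced order of a GPEA: `a ≤ b` iff `∃ c, a + c = b`. -/
def GPEA.le {E : Type} (G : GPEA E) (a b : E) : Prop := ∃ c, G.add a c = some b

/-- `b ⊖ a` : the element `c` with `c + a = b` (if it exists, else `0`). -/
noncomputable def GPEA.lsub {E : Type} (G : GPEA E) (b a : E) : E :=
  if h : ∃ c, G.add c a = some b then h.choose else G.zero

/-- `a ⊘ b` : the element `c` with `a + c = b` (if it exists, else `0`). -/
noncomputable def GPEA.rsub {E : Type} (G : GPEA E) (a b : E) : E :=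
  if h : ∃ c, G.add a c = some b then h.choose else G.zero

/-- A GPEA is directed if any two elements have a common upper bound. -/
def GPEA.directed {E : Type} (G : GPEA E) : Prop :=
  ∀ a b : E, ∃ c, G.le a c ∧ G.le b c

/-- A pseudo effect algebra (PEA): a partial algebra `(E; +, 0, 1)`
satisfying axioms (i)-(iv). -/
structure PEA (E : Type) where
  add : E → E → Option E
  zero : E
  one : E
  assoc_ex : ∀ a b c : E,
    (∃ ab, add a b = some ab ∧ (add ab c).isSome) ↔
    (∃ bc, add b c = some bc ∧ (add a bc).isSome)
  assoc_eq : ∀ a b c ab bc : E, add a b = some ab → add b c = some bc →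
    add ab c = add a bc
  compl_right : ∀ a : E, ∃! d, add a d = some one
  compl_left : ∀ a : E, ∃! e, add e a = some one
  exch : ∀ a b ab : E, add a b = some ab →
    (∃ d, add d a = some ab) ∧ (∃ e, add b e = some ab)
  one_left : ∀ a : E, (add one a).isSome → a = zero
  one_right : ∀ a : E, (add a one).isSome → a = zero

/-- The induced order of a PEA. -/
def PEA.le {E : Type} (P : PEA E) (a b : E) : Prop := ∃ c, P.add a c = some b

/-- `a⁻` : the unique element with `a⁻ + a = 1`. -/
noncomputable def PEA.negL {E : Type} (P : PEA E) (a : E) : E :=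
  (P.compl_left a).choose

/-- `a∼` : the unique element with `a + a∼ = 1`. -/
noncomputable def PEA.negR {E : Type} (P : PEA E) (a : E) : E :=
  (P.compl_right a).choose

/-- `E` is `λ,ρ`-weakly commutative. -/
def GPEA.lrWC {E I : Type} (G : GPEA E) (l r : I ≃ I) : Prop :=
  (∀ f a : I → E, ∀ i : I,
    ((G.add (f (r.symm i)) (a i)).isSome ↔ (G.add (a i) (f (l.symm i))).isSome)) ∧
  (∀ g b : I → E, ∀ i : I,
    ((G.add (g (l.symm i)) (b i)).isSome ↔ (G.add (b i) (g (r.symm i))).isSome))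

/-- The partial addition of the kite `K_I^{λ,ρ}(E)`: the carrier is
`(I → E) ⊕ (I → E)`, `Sum.inl` being the lower copy `E^I` and `Sum.inr` the
upper copy `(Ē)^I`; rules (I)-(IV). -/
noncomputable def kiteAdd {E I : Type} (G : GPEA E) (l r : I ≃ I) :
    (I → E) ⊕ (I → E) → (I → E) ⊕ (I → E) → Option ((I → E) ⊕ (I → E))
  | Sum.inr _, Sum.inr _ => none
  | Sum.inr a, Sum.inl f =>
      if _ : ∀ i, G.le (f (r.symm i)) (a i) then
        some (Sum.inr fun i => G.rsub (f (r.symm i)) (a i))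
      else none
  | Sum.inl f, Sum.inr a =>
      if _ : ∀ i, G.le (f (l.symm i)) (a i) then
        some (Sum.inr fun i => G.lsub (a i) (f (l.symm i)))
      else none
  | Sum.inl f, Sum.inl g =>
      if h : ∀ j, (G.add (f j) (g j)).isSome then
        some (Sum.inl fun j => (G.add (f j) (g j)).get (h j))
      else none

/-- The bottom element `0 = ⟨0_j⟩` of the kite. -/
def kiteZero (E I : Type) (G : GPEA E) : (I → E) ⊕ (I → E) :=
  Sum.inl fun _ => G.zero

/-- The top element `1 = ⟨0̄_i⟩` of the kite. -/
def kiteOne (E I : Type) (G : GPEA E) : (I → E) ⊕ (I → E) :=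
  Sum.inr fun _ => G.zero

/-- Riesz decomposition property RDP for a GPEA. -/
def GPEA.RDP {E : Type} (G : GPEA E) : Prop :=
  ∀ a1 a2 b1 b2 x : E, G.add a1 a2 = some x → G.add b1 b2 = some x →
    ∃ c11 c12 c21 c22 : E, G.add c11 c12 = some a1 ∧ G.add c21 c22 = some a2 ∧
      G.add c11 c21 = some b1 ∧ G.add c12 c22 = some b2

/-- RDP₁ for a GPEA. -/
def GPEA.RDP1 {E : Type} (G : GPEA E) : Prop :=
  ∀ a1 a2 b1 b2 x : E, G.add a1 a2 = some x → G.add b1 b2 = some x →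
    ∃ c11 c12 c21 c22 : E, G.add c11 c12 = some a1 ∧ G.add c21 c22 = some a2 ∧
      G.add c11 c21 = some b1 ∧ G.add c12 c22 = some b2 ∧
      (∀ u v : E, G.le u c12 → G.le v c21 → G.add u v = G.add v u)

/-- RDP₂ for a GPEA (`c₁₂ ∧ c₂₁ = 0`). -/
def GPEA.RDP2 {E : Type} (G : GPEA E) : Prop :=
  ∀ a1 a2 b1 b2 x : E, G.add a1 a2 = some x → G.add b1 b2 = some x →
    ∃ c11 c12 c21 c22 : E, G.add c11 c12 = some a1 ∧ G.add c21 c22 = some a2 ∧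
      G.add c11 c21 = some b1 ∧ G.add c12 c22 = some b2 ∧
      (∀ z : E, G.le z c12 → G.le z c21 → z = G.zero)

/-- RDP₀ for a GPEA. -/
def GPEA.RDP0 {E : Type} (G : GPEA E) : Prop :=
  ∀ a b c x : E, G.add b c = some x → G.le a x →
    ∃ b1 c1 : E, G.le b1 b ∧ G.le c1 c ∧ G.add b1 c1 = some a

/-- RDP for a PEA. -/
def PEA.RDP {E : Type} (P : PEA E) : Prop :=
  ∀ a1 a2 b1 b2 x : E, P.add a1 a2 = some x → P.add b1 b2 = some x →
    ∃ c11 c12 c21 c22 : E, P.add c11 c12 = some a1 ∧ P.add c21 c22 = some a2 ∧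
      P.add c11 c21 = some b1 ∧ P.add c12 c22 = some b2

/-- RDP₁ for a PEA. -/
def PEA.RDP1 {E : Type} (P : PEA E) : Prop :=
  ∀ a1 a2 b1 b2 x : E, P.add a1 a2 = some x → P.add b1 b2 = some x →
    ∃ c11 c12 c21 c22 : E, P.add c11 c12 = some a1 ∧ P.add c21 c22 = some a2 ∧
      P.add c11 c21 = some b1 ∧ P.add c12 c22 = some b2 ∧
      (∀ u v : E, P.le u c12 → P.le v c21 → P.add u v = P.add v u)

/-- RDP₂ for a PEA. -/
def PEA.RDP2 {E : Type} (P : PEA E) : Prop :=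
  ∀ a1 a2 b1 b2 x : E, P.add a1 a2 = some x → P.add b1 b2 = some x →
    ∃ c11 c12 c21 c22 : E, P.add c11 c12 = some a1 ∧ P.add c21 c22 = some a2 ∧
      P.add c11 c21 = some b1 ∧ P.add c12 c22 = some b2 ∧
      (∀ z : E, P.le z c12 → P.le z c21 → z = P.zero)

/-- RDP₀ for a PEA. -/
def PEA.RDP0 {E : Type} (P : PEA E) : Prop :=
  ∀ a b c x : E, P.add b c = some x → P.le a x →
    ∃ b1 c1 : E, P.le b1 b ∧ P.le c1 c ∧ P.add b1 c1 = some a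

/-- Ideal of a GPEA. -/
def GPEA.isIdeal {E : Type} (G : GPEA E) (A : Set E) : Prop :=
  G.zero ∈ A ∧ (∀ x y z : E, x ∈ A → y ∈ A → G.add x y = some z → z ∈ A) ∧
  (∀ x y : E, G.le x y → y ∈ A → x ∈ A)

/-- Normal ideal of a GPEA: `x + A = A + x` for all `x`. -/
def GPEA.isNormalIdeal {E : Type} (G : GPEA E) (A : Set E) : Prop :=
  G.isIdeal A ∧
  ∀ x : E, {z | ∃ y ∈ A, G.add x y = some z} = {z | ∃ y ∈ A, G.add y x = some z}

/-- Ideal of a PEA. -/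
def PEA.isIdeal {E : Type} (P : PEA E) (A : Set E) : Prop :=
  P.zero ∈ A ∧ (∀ x y z : E, x ∈ A → y ∈ A → P.add x y = some z → z ∈ A) ∧
  (∀ x y : E, P.le x y → y ∈ A → x ∈ A)

/-- Normal ideal of a PEA. -/
def PEA.isNormalIdeal {E : Type} (P : PEA E) (A : Set E) : Prop :=
  P.isIdeal A ∧
  ∀ x : E, {z | ∃ y ∈ A, P.add x y = some z} = {z | ∃ y ∈ A, P.add y x = some z}

/-- Maximal ideal of a PEA: proper and not properly contained in any proper ideal. -/
def PEA.isMaximalIdeal {E : Type} (P : PEA E) (A : Set E) : Prop :=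
  P.isIdeal A ∧ A ≠ Set.univ ∧
  ∀ B : Set E, P.isIdeal B → A ⊆ B → B = A ∨ B = Set.univ

/-- `i` and `j` are connected: `(ρ∘λ⁻¹)^m(i) = j` or `(λ∘ρ⁻¹)^m(i) = j` for some `m ≥ 0`. -/
def connected {I : Type} (l r : I ≃ I) (i j : I) : Prop :=
  ∃ m : ℕ, (fun x => r (l.symm x))^[m] i = j ∨ (fun x => l (r.symm x))^[m] i = j

/-!
All the axioms are checked in the group `G`, using that the partial sum of `Γ(G,u)` is the group
sum whenever it is defined. The order is needed only to see that `[0,u]` contains `c - a` and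
`-a + c` for `0 ≤ a ≤ c ≤ u`: these are the unique solutions of `x + a = c` and `a + x = c`,
which yields the exchange axiom and, for `c = u`, the complements `a⁻ = u - a` and `a∼ = -a + u`.
-/

lemma PEA.negL_add {E : Type} (P : PEA E) (a : E) : P.add (P.negL a) a = some P.one :=
  (P.compl_left a).choose_spec.1

lemma PEA.add_negR {E : Type} (P : PEA E) (a : E) : P.add a (P.negR a) = some P.one :=
  (P.compl_right a).choose_spec.1

section POGroup

variable {G : Type} [AddGroup G] [PartialOrder G]

/-- The interval `Γ(G,u) = [0,u]` of a po-group. -/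
abbrev Gamma (u : G) : Type := {g : G // 0 ≤ g ∧ g ≤ u}

noncomputable def Gamma.add {u : G} (a b : Gamma u) : Option (Gamma u) :=
  if h : 0 ≤ a.1 + b.1 ∧ a.1 + b.1 ≤ u then some ⟨a.1 + b.1, h⟩ else none

namespace Gamma

variable {u : G} {a b c : Gamma u}

lemma add_eq_some_iff : a.add b = some c ↔ a.1 + b.1 = c.1 := by
  unfold Gamma.add
  split_ifs with h
  · simp only [Option.some.injEq, Subtype.ext_iff, eq_comm]
  · simp only [false_iff]
    exact fun hc => h (hc ▸ c.2)

lemma add_congr {a' b' : Gamma u} (h : a.1 + b.1 = a'.1 + b'.1) : a.add b = a'.add b' := by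
  unfold Gamma.add
  simp only [h]

lemma le_of_add_eq_some_left [AddLeftMono G] (h : a.add b = some c) : a.1 ≤ c.1 :=
  add_eq_some_iff.1 h ▸ le_add_of_nonneg_right b.2.1

lemma le_of_add_eq_some_right [AddRightMono G] (h : a.add b = some c) : b.1 ≤ c.1 :=
  add_eq_some_iff.1 h ▸ le_add_of_nonneg_left a.2.1

variable [AddLeftMono G]

lemma add_isSome_iff : (a.add b).isSome ↔ a.1 + b.1 ≤ u := by
  unfold Gamma.add
  split_ifs with h
  · simpa using h.2
  · simpa using fun hu => h ⟨add_nonneg a.2.1 b.2.1, hu⟩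

lemma exists_add_add_isSome_iff :
    (∃ ab, a.add b = some ab ∧ (ab.add c).isSome) ↔ a.1 + b.1 + c.1 ≤ u := by
  refine ⟨fun ⟨ab, hab, hc⟩ => ?_, fun h => ?_⟩
  · rwa [add_isSome_iff, ← add_eq_some_iff.1 hab] at hc
  · have hab : a.1 + b.1 ≤ u := (le_add_of_nonneg_right c.2.1).trans h
    exact ⟨⟨_, add_nonneg a.2.1 b.2.1, hab⟩, add_eq_some_iff.2 rfl, add_isSome_iff.2 h⟩

variable [AddRightMono G]

lemma exists_add_add_isSome_iff' :
    (∃ bc, b.add c = some bc ∧ (a.add bc).isSome) ↔ a.1 + (b.1 + c.1) ≤ u := by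
  refine ⟨fun ⟨bc, hbc, ha⟩ => ?_, fun h => ?_⟩
  · rwa [add_isSome_iff, ← add_eq_some_iff.1 hbc] at ha
  · have hbc : b.1 + c.1 ≤ u := (le_add_of_nonneg_left a.2.1).trans h
    exact ⟨⟨_, add_nonneg b.2.1 c.2.1, hbc⟩, add_eq_some_iff.2 rfl, add_isSome_iff.2 h⟩

lemma existsUnique_add_left_eq_some (h : a.1 ≤ c.1) : ∃! d : Gamma u, d.add a = some c :=
  ⟨⟨c.1 - a.1, sub_nonneg.2 h, ((sub_le_self_iff c.1).2 a.2.1).trans c.2.2⟩,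
    add_eq_some_iff.2 (sub_add_cancel _ _),
    fun _ hd => Subtype.ext (eq_sub_of_add_eq (add_eq_some_iff.1 hd))⟩

lemma existsUnique_add_right_eq_some (h : a.1 ≤ c.1) : ∃! d : Gamma u, a.add d = some c :=
  ⟨⟨-a.1 + c.1, le_neg_add_iff_add_le.2 (by rwa [add_zero]),
      neg_add_le_iff_le_add.2 (c.2.2.trans (le_add_of_nonneg_left a.2.1))⟩,
    add_eq_some_iff.2 (add_neg_cancel_left _ _),
    fun _ hd => Subtype.ext (eq_neg_add_of_add_eq (add_eq_some_iff.1 hd))⟩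

noncomputable def pea (hu : 0 ≤ u) : PEA (Gamma u) where
  add := Gamma.add
  zero := ⟨0, le_rfl, hu⟩
  one := ⟨u, hu, le_rfl⟩
  assoc_ex _ _ _ := by rw [exists_add_add_isSome_iff, exists_add_add_isSome_iff', add_assoc]
  assoc_eq _ _ _ _ _ hab hbc :=
    add_congr (by rw [← add_eq_some_iff.1 hab, ← add_eq_some_iff.1 hbc, add_assoc])
  compl_right a := existsUnique_add_right_eq_some a.2.2
  compl_left a := existsUnique_add_left_eq_some a.2.2
  exch _ _ _ h := ⟨(existsUnique_add_left_eq_some (le_of_add_eq_some_left h)).exists,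
    (existsUnique_add_right_eq_some (le_of_add_eq_some_right h)).exists⟩
  one_left a h := Subtype.ext <|
    le_antisymm ((add_le_iff_nonpos_right u).1 (add_isSome_iff.1 h)) a.2.1
  one_right a h := Subtype.ext <|
    le_antisymm (add_le_iff_nonpos_left.1 (add_isSome_iff.1 h)) a.2.1

lemma val_pea_negL (hu : 0 ≤ u) (a : Gamma u) : ((pea hu).negL a).1 = u - a.1 :=
  eq_sub_of_add_eq (add_eq_some_iff.1 ((pea hu).negL_add a))

lemma val_pea_negR (hu : 0 ≤ u) (a : Gamma u) : ((pea hu).negR a).1 = -a.1 + u :=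
  eq_neg_add_of_add_eq (add_eq_some_iff.1 ((pea hu).add_negR a))

end Gamma

end POGroup

/-- For a po-group `G` and `u > 0`, the interval `Γ(G,u) = [0,u]`
with addition defined iff the (group) sum lies in `[0,u]` is a pseudo effect
algebra, in which `a⁻ = u - a` and `a∼ = -a + u`. -/
theorem interval_pea {G : Type} [AddGroup G] [PartialOrder G]
    [CovariantClass G G (· + ·) (· ≤ ·)]
    [CovariantClass G G (Function.swap (· + ·)) (· ≤ ·)]
    (u : G) (hu : 0 < u) :
    ∃ P : PEA {g : G // 0 ≤ g ∧ g ≤ u},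
      (∀ a b : {g : G // 0 ≤ g ∧ g ≤ u},
        P.add a b = if h : 0 ≤ a.1 + b.1 ∧ a.1 + b.1 ≤ u then some ⟨a.1 + b.1, h⟩
          else none) ∧
      P.zero = ⟨0, le_refl 0, le_of_lt hu⟩ ∧
      P.one = ⟨u, le_of_lt hu, le_refl u⟩ ∧
      (∀ a : {g : G // 0 ≤ g ∧ g ≤ u},
        (P.negL a).1 = u - a.1 ∧ (P.negR a).1 = -a.1 + u) :=
  ⟨Gamma.pea hu.le, fun _ _ => rfl, rfl, rfl,
    fun a => ⟨Gamma.val_pea_negL hu.le a, Gamma.val_pea_negR hu.le a⟩⟩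
end

section
/- If G is a po-group and G₀ is a convex subset of G⁺ containing 0, then (G₀; +, 0), with addition being the group addition restricted to pairs of elements of G₀ whose sum is again in G₀, is a generalized pseudo effect algebra. -/
open scoped Classical

/-!
Every axiom reduces to the group laws once one knows that the relevant sums stay in `G₀`.
This is where convexity enters: an element `x` with `0 ≤ x ≤ g` for some `g ∈ G₀` lies in
`G₀`. It applies to the partial sums in (GP1), and, by positivity, to the conjugates
`a + b - a` and `-b + (a + b)` of `b` and `a`, which are the witnesses `d`, `e` of (GP2).
-/

noncomputable def restrictedAdd {G : Type*} [Add G] (S : Set G) (a b : S) : Option S :=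
  if h : (a : G) + b ∈ S then some ⟨a + b, h⟩ else none

section restrictedAdd

variable {G : Type*} {S : Set G}

theorem restrictedAdd_eq_some_iff [Add G] {a b c : S} :
    restrictedAdd S a b = some c ↔ (a : G) + b = c := by
  unfold restrictedAdd
  split_ifs with h
  · simp [Subtype.ext_iff]
  · simp only [false_iff]
    exact fun hc => h (hc ▸ c.2)

theorem restrictedAdd_isSome_iff [Add G] {a b : S} :
    (restrictedAdd S a b).isSome ↔ (a : G) + b ∈ S := by
  unfold restrictedAdd
  split_ifs with h <;> simpa using h

theorem exists_restrictedAdd_eq_some_and_isSome_iff [Add G] {a b c : S} :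
    (∃ ab, restrictedAdd S a b = some ab ∧ (restrictedAdd S ab c).isSome) ↔
      (a : G) + b ∈ S ∧ (a : G) + b + c ∈ S := by
  simp only [restrictedAdd_eq_some_iff, restrictedAdd_isSome_iff]
  constructor
  · rintro ⟨ab, hab, h⟩
    rw [hab]
    exact ⟨ab.2, h⟩
  · rintro ⟨hab, h⟩
    exact ⟨⟨_, hab⟩, rfl, h⟩

theorem exists_restrictedAdd_eq_some_and_isSome_iff' [Add G] {a b c : S} :
    (∃ bc, restrictedAdd S b c = some bc ∧ (restrictedAdd S a bc).isSome) ↔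
      (b : G) + c ∈ S ∧ (a : G) + (b + c) ∈ S := by
  simp only [restrictedAdd_eq_some_iff, restrictedAdd_isSome_iff]
  constructor
  · rintro ⟨bc, hbc, h⟩
    rw [hbc]
    exact ⟨bc.2, h⟩
  · rintro ⟨hbc, h⟩
    exact ⟨⟨_, hbc⟩, rfl, h⟩

theorem restrictedAdd_assoc [AddSemigroup G] {a b c ab bc : S}
    (hab : restrictedAdd S a b = some ab) (hbc : restrictedAdd S b c = some bc) :
    restrictedAdd S ab c = restrictedAdd S a bc := by
  rw [restrictedAdd_eq_some_iff] at hab hbc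
  unfold restrictedAdd
  simp only [← hab, ← hbc, add_assoc]

end restrictedAdd

section OrdConnected

variable {G : Type*} {S : Set G}

theorem Set.OrdConnected.right_mem_of_add_mem [AddZeroClass G] [Preorder G] [AddRightMono G]
    (hS : S.OrdConnected) (h0 : (0 : G) ∈ S)
    {a b : G} (ha : 0 ≤ a) (hb : 0 ≤ b) (hab : a + b ∈ S) : b ∈ S :=
  hS.out h0 hab ⟨hb, le_add_of_nonneg_left ha⟩

theorem Set.OrdConnected.left_mem_of_add_mem [AddZeroClass G] [Preorder G] [AddLeftMono G]
    (hS : S.OrdConnected) (h0 : (0 : G) ∈ S)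
    {a b : G} (ha : 0 ≤ a) (hb : 0 ≤ b) (hab : a + b ∈ S) : a ∈ S :=
  hS.out h0 hab ⟨ha, le_add_of_nonneg_right hb⟩

variable [AddGroup G] [Preorder G] [AddLeftMono G] [AddRightMono G]

theorem Set.OrdConnected.add_add_neg_mem (hS : S.OrdConnected) (h0 : (0 : G) ∈ S)
    {a b : G} (ha : 0 ≤ a) (hb : 0 ≤ b) (hab : a + b ∈ S) : a + b + -a ∈ S := by
  refine hS.out h0 hab ⟨?_, ?_⟩
  · calc (0 : G) = a + 0 + -a := by simp
      _ ≤ a + b + -a := by gcongr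
  · calc a + b + -a ≤ a + b + 0 := by gcongr; exact neg_nonpos.mpr ha
      _ = a + b := add_zero _

theorem Set.OrdConnected.neg_add_add_mem (hS : S.OrdConnected) (h0 : (0 : G) ∈ S)
    {a b : G} (ha : 0 ≤ a) (hb : 0 ≤ b) (hab : a + b ∈ S) : -b + (a + b) ∈ S := by
  refine hS.out h0 hab ⟨?_, ?_⟩
  · calc (0 : G) = -b + (0 + b) := by simp
      _ ≤ -b + (a + b) := by gcongr
  · calc -b + (a + b) ≤ 0 + (a + b) := by gcongr; exact neg_nonpos.mpr hb
      _ = a + b := zero_add _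

end OrdConnected

section ofOrdConnected

variable {G : Type} [AddGroup G] [PartialOrder G] [AddLeftMono G] [AddRightMono G] {S : Set G}

theorem restrictedAdd_assoc_ex (hpos : ∀ g ∈ S, 0 ≤ g) (h0 : (0 : G) ∈ S)
    (hS : S.OrdConnected) (a b c : S) :
    (∃ ab, restrictedAdd S a b = some ab ∧ (restrictedAdd S ab c).isSome) ↔
      (∃ bc, restrictedAdd S b c = some bc ∧ (restrictedAdd S a bc).isSome) := by
  rw [exists_restrictedAdd_eq_some_and_isSome_iff, exists_restrictedAdd_eq_some_and_isSome_iff',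
    add_assoc]
  have ha := hpos a a.2
  have hb := hpos b b.2
  have hc := hpos c c.2
  constructor
  · rintro ⟨-, h⟩
    exact ⟨hS.right_mem_of_add_mem h0 ha (add_nonneg hb hc) h, h⟩
  · rintro ⟨-, h⟩
    rw [← add_assoc] at h ⊢
    exact ⟨hS.left_mem_of_add_mem h0 (add_nonneg ha hb) hc h, h⟩

theorem restrictedAdd_exch (hpos : ∀ g ∈ S, 0 ≤ g) (h0 : (0 : G) ∈ S)
    (hS : S.OrdConnected) {a b ab : S} (hab : restrictedAdd S a b = some ab) :
    (∃ d, restrictedAdd S d a = some ab) ∧ (∃ e, restrictedAdd S b e = some ab) := by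
  rw [restrictedAdd_eq_some_iff] at hab
  have ha := hpos a a.2
  have hb := hpos b b.2
  have hmem : (a : G) + b ∈ S := hab ▸ ab.2
  refine ⟨⟨⟨_, hS.add_add_neg_mem h0 ha hb hmem⟩, ?_⟩,
    ⟨⟨_, hS.neg_add_add_mem h0 ha hb hmem⟩, ?_⟩⟩ <;>
    simp [restrictedAdd_eq_some_iff, hab]

noncomputable def GPEA.ofOrdConnected (S : Set G) (hpos : ∀ g ∈ S, 0 ≤ g) (h0 : (0 : G) ∈ S)
    (hS : S.OrdConnected) : GPEA S where
  add := restrictedAdd S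
  zero := ⟨0, h0⟩
  assoc_ex := restrictedAdd_assoc_ex hpos h0 hS
  assoc_eq _ _ _ _ _ := restrictedAdd_assoc
  exch _ _ _ := restrictedAdd_exch hpos h0 hS
  cancel_left _ _ _ _ h₁ h₂ := by
    rw [restrictedAdd_eq_some_iff] at h₁ h₂
    exact Subtype.ext (add_left_cancel (h₁.trans h₂.symm))
  cancel_right _ _ _ _ h₁ h₂ := by
    rw [restrictedAdd_eq_some_iff] at h₁ h₂
    exact Subtype.ext (add_right_cancel (h₁.trans h₂.symm))
  pos a b h := by
    rw [restrictedAdd_eq_some_iff] at h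
    simpa [Subtype.ext_iff] using (add_eq_zero_iff_of_nonneg (hpos a a.2) (hpos b b.2)).mp h
  add_zero _ := restrictedAdd_eq_some_iff.mpr (_root_.add_zero _)
  zero_add _ := restrictedAdd_eq_some_iff.mpr (_root_.zero_add _)

end ofOrdConnected

/-- If `G₀` is a convex subset of the positive cone of a po-group
`G` containing `0`, then `G₀` with the group addition restricted to pairs whose
sum lies again in `G₀` is a generalized pseudo effect algebra. -/
theorem convex_subset_gpea {G : Type} [AddGroup G] [PartialOrder G]
    [CovariantClass G G (· + ·) (· ≤ ·)]
    [CovariantClass G G (Function.swap (· + ·)) (· ≤ ·)]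
    (G0 : Set G) (hpos : ∀ g ∈ G0, 0 ≤ g) (h0 : (0 : G) ∈ G0)
    (hconv : ∀ a ∈ G0, ∀ b ∈ G0, ∀ c : G, a ≤ c → c ≤ b → c ∈ G0) :
    ∃ Gp : GPEA G0,
      (∀ a b : G0,
        Gp.add a b = if h : a.1 + b.1 ∈ G0 then some ⟨a.1 + b.1, h⟩ else none) ∧
      Gp.zero = ⟨0, h0⟩ := by
  have hS : G0.OrdConnected := ⟨fun _ ha _ hb _ hc => hconv _ ha _ hb _ hc.1 hc.2⟩
  exact ⟨GPEA.ofOrdConnected G0 hpos h0 hS, fun _ _ => rfl, rfl⟩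
end

section
/- A pseudo effect algebra E is weakly commutative (x+y defined iff y+x defined) if and only if E is symmetric (a⁻ = a∼ for all a ∈ E). -/
open scoped Classical

/-!
`a + b` is defined iff `a ≤ b⁻` iff `b ≤ a∼`. Symmetry therefore makes both sides of
weak commutativity say `a ≤ b⁻`. Conversely, weak commutativity makes `a + a⁻` and
`a∼ + a` defined, i.e. `a⁻ ≤ a∼` and `a∼ ≤ a⁻`, and `≤` is antisymmetric.
-/

namespace PEA

variable {E : Type} (P : PEA E)

lemma negL_spec (a : E) : P.add (P.negL a) a = some P.one :=
  (P.compl_left a).choose_spec.1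

lemma negL_unique {a e : E} (h : P.add e a = some P.one) : e = P.negL a :=
  (P.compl_left a).choose_spec.2 e h

lemma negR_spec (a : E) : P.add a (P.negR a) = some P.one :=
  (P.compl_right a).choose_spec.1

lemma negR_unique {a d : E} (h : P.add a d = some P.one) : d = P.negR a :=
  (P.compl_right a).choose_spec.2 d h

lemma negR_negL (a : E) : P.negR (P.negL a) = a :=
  (P.negR_unique (P.negL_spec a)).symm

lemma negL_injective : Function.Injective P.negL :=
  Function.LeftInverse.injective P.negR_negL

variable {P}

lemma exists_add_right_of_add_add {a b c ab x : E} (hab : P.add a b = some ab)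
    (h : P.add ab c = some x) : ∃ bc, P.add b c = some bc ∧ P.add a bc = some x := by
  obtain ⟨bc, hbc, -⟩ := (P.assoc_ex a b c).mp ⟨ab, hab, by simp [h]⟩
  exact ⟨bc, hbc, (P.assoc_eq a b c ab bc hab hbc).symm.trans h⟩

lemma exists_add_left_of_add_add {a b c bc x : E} (hbc : P.add b c = some bc)
    (h : P.add a bc = some x) : ∃ ab, P.add a b = some ab ∧ P.add ab c = some x := by
  obtain ⟨ab, hab, -⟩ := (P.assoc_ex a b c).mpr ⟨bc, hbc, by simp [h]⟩
  exact ⟨ab, hab, (P.assoc_eq a b c ab bc hab hbc).trans h⟩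

lemma add_negR_of_add {a b c : E} (h : P.add a b = some c) :
    P.add b (P.negR c) = some (P.negR a) := by
  obtain ⟨t, ht, hat⟩ := exists_add_right_of_add_add h (P.negR_spec c)
  rwa [P.negR_unique hat] at ht

lemma negL_add_of_add {a b c : E} (h : P.add a b = some c) :
    P.add (P.negL c) a = some (P.negL b) := by
  obtain ⟨t, ht, htb⟩ := exists_add_left_of_add_add h (P.negL_spec c)
  rwa [P.negL_unique htb] at ht

lemma cancel_left {a b c x : E} (hb : P.add a b = some x) (hc : P.add a c = some x) :
    b = c :=
  P.negL_injective (Option.some_injective _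
    ((negL_add_of_add hb).symm.trans (negL_add_of_add hc)))

variable (P)

lemma one_add_zero : P.add P.one P.zero = some P.one := by
  have h := P.negR_spec P.one
  rwa [P.one_left (P.negR P.one) (by simp [h])] at h

lemma zero_add_one : P.add P.zero P.one = some P.one := by
  have h := P.negL_spec P.one
  rwa [P.one_right (P.negL P.one) (by simp [h])] at h

lemma add_zero (a : E) : P.add a P.zero = some a := by
  obtain ⟨t, ht, hat⟩ := exists_add_right_of_add_add (P.negL_spec a) P.one_add_zero
  rwa [P.negR_unique hat, P.negR_negL] at ht

variable {P}

lemma eq_zero_of_add_eq_zero {x y : E} (h : P.add x y = some P.zero) :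
    x = P.zero ∧ y = P.zero := by
  obtain ⟨_, h1x, -⟩ := exists_add_left_of_add_add h P.one_add_zero
  obtain ⟨_, hy1, -⟩ := exists_add_right_of_add_add h P.zero_add_one
  exact ⟨P.one_left x (by simp [h1x]), P.one_right y (by simp [hy1])⟩

lemma le_antisymm {x y : E} (hxy : P.le x y) (hyx : P.le y x) : x = y := by
  obtain ⟨p, hp⟩ := hxy
  obtain ⟨q, hq⟩ := hyx
  obtain ⟨r, hpq, hxr⟩ := exists_add_right_of_add_add hp hq
  obtain rfl : r = P.zero := cancel_left hxr (P.add_zero x)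
  obtain rfl : p = P.zero := (eq_zero_of_add_eq_zero hpq).1
  rw [P.add_zero] at hp
  exact Option.some_inj.mp hp

lemma le_iff_exists_add_left {a b : E} : P.le a b ↔ ∃ c, P.add c a = some b :=
  ⟨fun ⟨_, h⟩ => (P.exch _ _ _ h).1, fun ⟨_, h⟩ => (P.exch _ _ _ h).2⟩

lemma isSome_add_iff_le_negL {a b : E} : (P.add a b).isSome ↔ P.le a (P.negL b) := by
  rw [le_iff_exists_add_left]
  constructor
  · intro h
    obtain ⟨c, hc⟩ := Option.isSome_iff_exists.mp h
    exact ⟨_, negL_add_of_add hc⟩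
  · rintro ⟨t, ht⟩
    obtain ⟨c, hc, -⟩ := exists_add_right_of_add_add ht (P.negL_spec b)
    simp [hc]

lemma isSome_add_iff_le_negR {a b : E} : (P.add a b).isSome ↔ P.le b (P.negR a) := by
  constructor
  · intro h
    obtain ⟨c, hc⟩ := Option.isSome_iff_exists.mp h
    exact ⟨_, add_negR_of_add hc⟩
  · rintro ⟨t, ht⟩
    obtain ⟨c, hc, -⟩ := exists_add_left_of_add_add ht (P.negR_spec a)
    simp [hc]

end PEA

/-- A pseudo effect algebra is weakly commutative (`x + y` defined
iff `y + x` defined) iff it is symmetric (`a⁻ = a∼` for all `a`). -/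
theorem pea_weaklyCommutative_iff_symmetric {E : Type} (P : PEA E) :
    (∀ x y : E, (P.add x y).isSome ↔ (P.add y x).isSome) ↔
    (∀ a : E, P.negL a = P.negR a) := by
  constructor
  · intro wc a
    apply PEA.le_antisymm
    · exact PEA.isSome_add_iff_le_negR.mp ((wc _ _).mp (by simp [P.negL_spec a]))
    · exact PEA.isSome_add_iff_le_negL.mp ((wc _ _).mp (by simp [P.negR_spec a]))
  · intro sym x y
    rw [PEA.isSome_add_iff_le_negL, PEA.isSome_add_iff_le_negR, sym]
end

section
/- Let λ,ρ : I → I be bijections with λ ≠ ρ, and let E be a GPEA. Then E is λ,ρ-weakly commutative if and only if a + b is defined in E for all a, b ∈ E. -/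
open scoped Classical

/-- If `λ ≠ ρ`, then a GPEA `E` is `λ,ρ`-weakly commutative iff
`a + b` is defined in `E` for all `a, b ∈ E`. -/
theorem lrWC_iff_total {E I : Type} (G : GPEA E) (l r : I ≃ I)
    (hne : (l : I → I) ≠ (r : I → I)) :
    G.lrWC l r ↔ ∀ a b : E, (G.add a b).isSome := by
  constructor
  · intro ⟨h1, _⟩ a b
    obtain ⟨x, hx⟩ : ∃ x, l x ≠ r x := by
      by_contra h
      push_neg at h
      exact hne (funext h)
    set i₀ := l x with hi0
    have hls : l.symm i₀ = x := l.symm_apply_apply x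
    have hrs : r.symm i₀ ≠ x := by
      intro h
      apply hx
      rw [hi0] at h
      exact (r.eq_symm_apply.mp h.symm).symm
    have hne2 : l.symm i₀ ≠ r.symm i₀ := by rw [hls]; exact fun h => hrs h.symm
    have := h1 (fun j => if j = r.symm i₀ then G.zero else b) (fun _ => a) i₀
    simp only [if_pos rfl, if_neg hne2] at this
    apply this.mp
    simp [G.zero_add a]
  · intro h
    exact ⟨fun f a i => by simp [h], fun g b i => by simp [h]⟩
end

section
/- Let λ,ρ : I → I be bijections and E a λ,ρ-weakly commutative GPEA. The kite structure K_I^{λ,ρ}(E) on the disjoint union E^I ⊎ (Ē)^I, with 0 = ⟨0_j⟩, 1 = ⟨0̄_i⟩ and partial addition defined by rules (I)–(IV), is a pseudo effect algebra. -/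
open scoped Classical

/-!
Every kite sum is computed coordinatewise in `E`, the upper coordinates being reindexed by `λ`
or `ρ`: `⟨f_j⟩ + ⟨ā_i⟩ = ⟨c̄_i⟩` means `c_i + f_{λ⁻¹ i} = a_i`, and `⟨ā_i⟩ + ⟨f_j⟩ = ⟨c̄_i⟩`
means `f_{ρ⁻¹ i} + c_i = a_i`. Associativity thus reduces, case by case, to associativity in `E`;
the right complements of `⟨f_j⟩` and `⟨ā_i⟩` are `⟨(f_{λ⁻¹ i})‾⟩` and `⟨a_{ρ j}⟩`; and for the
exchange axiom weak commutativity turns `f_{ρ⁻¹ i} + c_i` being defined into `c_i + f_{λ⁻¹ i}`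
being defined. Reversing the addition of `E` and swapping `λ` with `ρ` reverses the addition of
the kite, so each left-handed axiom follows from its right-handed twin.
-/

section PartialAssociative

variable {α : Type} (add : α → α → Option α)

def PartialAssociative : Prop :=
  ∀ a b c x : α, (∃ ab, add a b = some ab ∧ add ab c = some x) ↔
    ∃ bc, add b c = some bc ∧ add a bc = some x

variable {add}

theorem partialAssociative_of_forall_imp
    (h : ∀ a b c x : α, (∃ ab, add a b = some ab ∧ add ab c = some x) →
      ∃ bc, add b c = some bc ∧ add a bc = some x)
    (h' : ∀ a b c x : α, (∃ ab, flip add a b = some ab ∧ flip add ab c = some x) →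
      ∃ bc, flip add b c = some bc ∧ flip add a bc = some x) :
    PartialAssociative add :=
  fun a b c x => ⟨h a b c x, h' c b a x⟩

namespace PartialAssociative

theorem exists_isSome_iff (h : PartialAssociative add) (a b c : α) :
    (∃ ab, add a b = some ab ∧ (add ab c).isSome) ↔
      ∃ bc, add b c = some bc ∧ (add a bc).isSome := by
  simp only [Option.isSome_iff_exists]
  constructor
  · rintro ⟨ab, hab, x, hx⟩
    obtain ⟨bc, hbc, hx'⟩ := (h a b c x).mp ⟨ab, hab, hx⟩
    exact ⟨bc, hbc, x, hx'⟩
  · rintro ⟨bc, hbc, x, hx⟩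
    obtain ⟨ab, hab, hx'⟩ := (h a b c x).mpr ⟨bc, hbc, hx⟩
    exact ⟨ab, hab, x, hx'⟩

theorem add_eq (h : PartialAssociative add) {a b c ab bc : α}
    (hab : add a b = some ab) (hbc : add b c = some bc) : add ab c = add a bc := by
  refine Option.ext fun x => ⟨fun hx => ?_, fun hx => ?_⟩
  · obtain ⟨bc', hbc', hx'⟩ := (h a b c x).mp ⟨ab, hab, hx⟩
    rwa [Option.some_inj.mp (hbc.symm.trans hbc')]
  · obtain ⟨ab', hab', hx'⟩ := (h a b c x).mpr ⟨bc, hbc, hx⟩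
    rwa [Option.some_inj.mp (hab.symm.trans hab')]

end PartialAssociative

end PartialAssociative

namespace GPEA

variable {E : Type} (G : GPEA E)

def op : GPEA E where
  add a b := G.add b a
  zero := G.zero
  assoc_ex a b c := (G.assoc_ex c b a).symm
  assoc_eq a b c ab bc hab hbc := (G.assoc_eq c b a bc ab hbc hab).symm
  exch a b ab h := (G.exch b a ab h).symm
  cancel_left a b c x := G.cancel_right a b c x
  cancel_right a b c x := G.cancel_left a b c x
  pos a b h := (G.pos b a h).symm
  add_zero := G.zero_add
  zero_add := G.add_zero

variable {G}

theorem le_op_iff {a b : E} : G.op.le a b ↔ G.le a b :=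
  ⟨fun ⟨_, h⟩ => (G.exch _ a b h).2, fun ⟨_, h⟩ => (G.exch a _ b h).1⟩

theorem add_eq_some_iff_rsub {a b c : E} : G.add a c = some b ↔ G.le a b ∧ G.rsub a b = c := by
  unfold GPEA.le GPEA.rsub
  constructor
  · intro h
    have hle : ∃ c, G.add a c = some b := ⟨c, h⟩
    rw [dif_pos hle]
    exact ⟨hle, G.cancel_left a _ c b hle.choose_spec h⟩
  · rintro ⟨hle, rfl⟩
    rw [dif_pos hle]
    exact hle.choose_spec

theorem reassoc_right {a b c x : E} (h : ∃ ab, G.add a b = some ab ∧ G.add ab c = some x) :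
    ∃ bc, G.add b c = some bc ∧ G.add a bc = some x := by
  obtain ⟨ab, hab, hx⟩ := h
  obtain ⟨bc, hbc, -⟩ := (G.assoc_ex a b c).mp ⟨ab, hab, by rw [hx]; rfl⟩
  exact ⟨bc, hbc, by rw [← G.assoc_eq a b c ab bc hab hbc, hx]⟩

variable (G)

theorem partialAssociative : PartialAssociative G.add :=
  partialAssociative_of_forall_imp (fun _ _ _ _ => G.reassoc_right)
    (fun _ _ _ _ => G.op.reassoc_right)

end GPEA

section Kite

variable {E I : Type} {G : GPEA E} {l r : I ≃ I}

@[simp]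
theorem kiteAdd_inr_inr (a b : I → E) : kiteAdd G l r (Sum.inr a) (Sum.inr b) = none := rfl

theorem kiteAdd_op (x y : (I → E) ⊕ (I → E)) : kiteAdd G.op r l y x = kiteAdd G l r x y := by
  rcases x with f | a <;> rcases y with g | b
  · rfl
  · simp only [kiteAdd, GPEA.le_op_iff]; rfl
  · simp only [kiteAdd, GPEA.le_op_iff]; rfl
  · rfl

theorem kiteAdd_inl_inl_eq_some_iff {f g : I → E} {z : (I → E) ⊕ (I → E)} :
    kiteAdd G l r (Sum.inl f) (Sum.inl g) = some z ↔
      ∃ s, z = Sum.inl s ∧ ∀ j, G.add (f j) (g j) = some (s j) := by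
  simp only [kiteAdd, Option.dite_none_right_eq_some, Option.some_inj]
  constructor
  · rintro ⟨h, rfl⟩
    exact ⟨_, rfl, fun j => (Option.some_get (h j)).symm⟩
  · rintro ⟨s, rfl, hs⟩
    exact ⟨fun j => by simp [hs j], by simp [hs]⟩

theorem kiteAdd_inr_inl_eq_some_iff {a f : I → E} {z : (I → E) ⊕ (I → E)} :
    kiteAdd G l r (Sum.inr a) (Sum.inl f) = some z ↔
      ∃ c, z = Sum.inr c ∧ ∀ i, G.add (f (r.symm i)) (c i) = some (a i) := by
  simp only [kiteAdd, Option.dite_none_right_eq_some, Option.some_inj, GPEA.add_eq_some_iff_rsub]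
  constructor
  · rintro ⟨h, rfl⟩
    exact ⟨_, rfl, fun i => ⟨h i, rfl⟩⟩
  · rintro ⟨c, rfl, hc⟩
    exact ⟨fun i => (hc i).1, congrArg Sum.inr (funext fun i => (hc i).2)⟩

theorem kiteAdd_inl_inr_eq_some_iff {f a : I → E} {z : (I → E) ⊕ (I → E)} :
    kiteAdd G l r (Sum.inl f) (Sum.inr a) = some z ↔
      ∃ c, z = Sum.inr c ∧ ∀ i, G.add (c i) (f (l.symm i)) = some (a i) := by
  rw [← kiteAdd_op]
  exact kiteAdd_inr_inl_eq_some_iff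

theorem kiteAdd_reassoc_right {x y w z : (I → E) ⊕ (I → E)}
    (h : ∃ xy, kiteAdd G l r x y = some xy ∧ kiteAdd G l r xy w = some z) :
    ∃ yw, kiteAdd G l r y w = some yw ∧ kiteAdd G l r x yw = some z := by
  obtain ⟨xy, hxy, hz⟩ := h
  rcases x with f | a <;> rcases y with g | b <;> rcases w with k | c
  · obtain ⟨s, rfl, hs⟩ := kiteAdd_inl_inl_eq_some_iff.mp hxy
    obtain ⟨t, rfl, ht⟩ := kiteAdd_inl_inl_eq_some_iff.mp hz
    choose u hu ht' using fun j => (G.partialAssociative _ _ _ _).mp ⟨_, hs j, ht j⟩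
    exact ⟨_, kiteAdd_inl_inl_eq_some_iff.mpr ⟨u, rfl, hu⟩,
      kiteAdd_inl_inl_eq_some_iff.mpr ⟨t, rfl, ht'⟩⟩
  · obtain ⟨s, rfl, hs⟩ := kiteAdd_inl_inl_eq_some_iff.mp hxy
    obtain ⟨t, rfl, ht⟩ := kiteAdd_inl_inr_eq_some_iff.mp hz
    choose u ht' hu using fun i => (G.partialAssociative _ _ _ _).mpr ⟨_, hs (l.symm i), ht i⟩
    exact ⟨_, kiteAdd_inl_inr_eq_some_iff.mpr ⟨u, rfl, hu⟩,
      kiteAdd_inl_inr_eq_some_iff.mpr ⟨t, rfl, ht'⟩⟩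
  · obtain ⟨u, rfl, hu⟩ := kiteAdd_inl_inr_eq_some_iff.mp hxy
    obtain ⟨t, rfl, ht⟩ := kiteAdd_inr_inl_eq_some_iff.mp hz
    choose v ht' hv using fun i => (G.partialAssociative _ _ _ _).mp ⟨_, ht i, hu i⟩
    exact ⟨_, kiteAdd_inr_inl_eq_some_iff.mpr ⟨v, rfl, hv⟩,
      kiteAdd_inl_inr_eq_some_iff.mpr ⟨t, rfl, ht'⟩⟩
  · obtain ⟨u, rfl, -⟩ := kiteAdd_inl_inr_eq_some_iff.mp hxy
    simp at hz
  · obtain ⟨u, rfl, hu⟩ := kiteAdd_inr_inl_eq_some_iff.mp hxy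
    obtain ⟨t, rfl, ht⟩ := kiteAdd_inr_inl_eq_some_iff.mp hz
    choose v hv ht' using fun i => (G.partialAssociative _ _ _ _).mpr ⟨_, ht i, hu i⟩
    refine ⟨Sum.inl fun j => v (r j), kiteAdd_inl_inl_eq_some_iff.mpr ⟨_, rfl, fun j => ?_⟩,
      kiteAdd_inr_inl_eq_some_iff.mpr ⟨t, rfl, fun i => by simpa using ht' i⟩⟩
    simpa using hv (r j)
  · obtain ⟨u, rfl, -⟩ := kiteAdd_inr_inl_eq_some_iff.mp hxy
    simp at hz
  · simp at hxy
  · simp at hxy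

variable (G l r) in
theorem kiteAdd_partialAssociative : PartialAssociative (kiteAdd G l r) := by
  refine partialAssociative_of_forall_imp (fun _ _ _ _ => kiteAdd_reassoc_right)
    fun x y w z => ?_
  simpa only [flip, kiteAdd_op] using
    kiteAdd_reassoc_right (G := G.op) (l := r) (r := l) (x := x) (y := y) (w := w) (z := z)

variable (l r) in
def kiteCompl : (I → E) ⊕ (I → E) → (I → E) ⊕ (I → E)
  | Sum.inl f => Sum.inr (f ∘ l.symm)
  | Sum.inr a => Sum.inl (a ∘ r)

theorem kiteAdd_eq_kiteOne_iff_right {x y : (I → E) ⊕ (I → E)} :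
    kiteAdd G l r x y = some (kiteOne E I G) ↔ y = kiteCompl l r x := by
  rcases x with f | a <;> rcases y with g | b
  · simp [kiteAdd_inl_inl_eq_some_iff, kiteOne, kiteCompl]
  · simp only [kiteAdd_inl_inr_eq_some_iff, kiteOne, kiteCompl, Sum.inr.injEq, exists_eq_left',
      G.zero_add, Option.some_inj]
    exact funext_iff.symm.trans eq_comm
  · simp only [kiteAdd_inr_inl_eq_some_iff, kiteOne, kiteCompl, Sum.inr.injEq, exists_eq_left',
      G.add_zero, Option.some_inj, Sum.inl.injEq]
    exact funext_iff.symm.trans (r.comp_symm_eq a g)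
  · simp [kiteOne, kiteCompl]

theorem kiteAdd_eq_kiteOne_iff_left {x y : (I → E) ⊕ (I → E)} :
    kiteAdd G l r y x = some (kiteOne E I G) ↔ y = kiteCompl r l x := by
  rw [← kiteAdd_op]
  exact kiteAdd_eq_kiteOne_iff_right

theorem GPEA.lrWC.op (hwc : G.lrWC l r) : G.op.lrWC r l :=
  ⟨fun f a i => (hwc.1 f a i).symm, fun g b i => (hwc.2 g b i).symm⟩

theorem kiteAdd_exists_add_right (hwc : G.lrWC l r) {x y z : (I → E) ⊕ (I → E)}
    (h : kiteAdd G l r x y = some z) : ∃ e, kiteAdd G l r y e = some z := by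
  rcases x with f | a <;> rcases y with g | b
  · obtain ⟨s, rfl, hs⟩ := kiteAdd_inl_inl_eq_some_iff.mp h
    choose e he using fun j => (G.exch _ _ _ (hs j)).2
    exact ⟨Sum.inl e, kiteAdd_inl_inl_eq_some_iff.mpr ⟨s, rfl, he⟩⟩
  · obtain ⟨u, rfl, hu⟩ := kiteAdd_inl_inr_eq_some_iff.mp h
    choose d hd using fun i => (G.exch _ _ _ (hu i)).1
    exact ⟨Sum.inl fun j => d (r j),
      kiteAdd_inr_inl_eq_some_iff.mpr ⟨u, rfl, fun i => by simpa using hd i⟩⟩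
  · obtain ⟨u, rfl, hu⟩ := kiteAdd_inr_inl_eq_some_iff.mp h
    choose v hv using fun i => Option.isSome_iff_exists.mp ((hwc.1 g u i).mp (by simp [hu i]))
    exact ⟨Sum.inr v, kiteAdd_inl_inr_eq_some_iff.mpr ⟨u, rfl, hv⟩⟩
  · simp at h

theorem kiteAdd_exists_add_left (hwc : G.lrWC l r) {x y z : (I → E) ⊕ (I → E)}
    (h : kiteAdd G l r x y = some z) : ∃ d, kiteAdd G l r d x = some z := by
  simpa only [kiteAdd_op] using kiteAdd_exists_add_right hwc.op (x := y) (y := x) (z := z)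
    (by rwa [kiteAdd_op])

theorem eq_kiteZero_of_isSome_kiteAdd_kiteOne {x : (I → E) ⊕ (I → E)}
    (h : (kiteAdd G l r x (kiteOne E I G)).isSome) : x = kiteZero E I G := by
  rcases x with f | a
  · obtain ⟨z, hz⟩ := Option.isSome_iff_exists.mp h
    obtain ⟨u, -, hu⟩ := kiteAdd_inl_inr_eq_some_iff.mp hz
    exact congrArg Sum.inl (funext fun j => by simpa using (G.pos _ _ (hu (l j))).2)
  · simp [kiteOne] at h

theorem eq_kiteZero_of_isSome_kiteOne_kiteAdd {x : (I → E) ⊕ (I → E)}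
    (h : (kiteAdd G l r (kiteOne E I G) x).isSome) : x = kiteZero E I G := by
  rw [← kiteAdd_op] at h
  exact eq_kiteZero_of_isSome_kiteAdd_kiteOne (G := G.op) h

end Kite

/-- For bijections `λ,ρ : I → I` and a `λ,ρ`-weakly commutative
GPEA `E`, the kite structure `K_I^{λ,ρ}(E)` on `E^I ⊎ (Ē)^I` with `0 = ⟨0_j⟩`,
`1 = ⟨0̄_i⟩` and addition rules (I)-(IV) is a pseudo effect algebra. -/
theorem kite_is_pea {E I : Type} (G : GPEA E) (l r : I ≃ I)
    (hwc : G.lrWC l r) :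
    ∃ P : PEA ((I → E) ⊕ (I → E)),
      P.add = kiteAdd G l r ∧ P.zero = kiteZero E I G ∧ P.one = kiteOne E I G :=
  ⟨{ add := kiteAdd G l r
     zero := kiteZero E I G
     one := kiteOne E I G
     assoc_ex := (kiteAdd_partialAssociative G l r).exists_isSome_iff
     assoc_eq := fun _ _ _ _ _ => (kiteAdd_partialAssociative G l r).add_eq
     compl_right := fun x => by simpa only [kiteAdd_eq_kiteOne_iff_right] using existsUnique_eq
     compl_left := fun x => by simpa only [kiteAdd_eq_kiteOne_iff_left] using existsUnique_eq
     exch := fun _ _ _ h => ⟨kiteAdd_exists_add_left hwc h, kiteAdd_exists_add_right hwc h⟩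
     one_left := fun _ => eq_kiteZero_of_isSome_kiteOne_kiteAdd
     one_right := fun _ => eq_kiteZero_of_isSome_kiteAdd_kiteOne }, rfl, rfl, rfl⟩
end

section
/- In the kite pseudo effect algebra K_I^{λ,ρ}(E), the negations are given by ⟨ā_i⟩∼ = ⟨a_{ρ(j)}⟩, ⟨ā_i⟩⁻ = ⟨a_{λ(j)}⟩, ⟨f_j⟩∼ = ⟨f̄_{λ⁻¹(i)}⟩, ⟨f_j⟩⁻ = ⟨f̄_{ρ⁻¹(i)}⟩; consequently K_I^{λ,ρ}(E) is symmetric if and only if λ = ρ, provided E is non-trivial. -/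
open scoped Classical

lemma GPEA.le_refl' {E : Type} (G : GPEA E) (a : E) : G.le a a := ⟨G.zero, G.add_zero a⟩

lemma GPEA.rsub_self {E : Type} (G : GPEA E) (a : E) : G.rsub a a = G.zero := by
  have h : ∃ c, G.add a c = some a := ⟨G.zero, G.add_zero a⟩
  rw [GPEA.rsub, dif_pos h]
  exact G.cancel_left a _ G.zero a h.choose_spec (G.add_zero a)

lemma GPEA.lsub_self {E : Type} (G : GPEA E) (a : E) : G.lsub a a = G.zero := by
  have h : ∃ c, G.add c a = some a := ⟨G.zero, G.zero_add a⟩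
  rw [GPEA.lsub, dif_pos h]
  exact G.cancel_right a _ G.zero a h.choose_spec (G.zero_add a)

lemma PEA.negR_eq {E : Type} (P : PEA E) (x d : E) (h : P.add x d = some P.one) :
    P.negR x = d := ((P.compl_right x).choose_spec.2 d h).symm

lemma PEA.negL_eq {E : Type} (P : PEA E) (x e : E) (h : P.add e x = some P.one) :
    P.negL x = e := ((P.compl_left x).choose_spec.2 e h).symm

/-- In the kite pseudo effect algebra `K_I^{λ,ρ}(E)`, the
negations are `⟨ā_i⟩∼ = ⟨a_{ρ(j)}⟩`, `⟨ā_i⟩⁻ = ⟨a_{λ(j)}⟩`,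
`⟨f_j⟩∼ = ⟨f̄_{λ⁻¹(i)}⟩`, `⟨f_j⟩⁻ = ⟨f̄_{ρ⁻¹(i)}⟩`; consequently (for
non-trivial `E`) the kite is symmetric iff `λ = ρ`. -/
theorem kite_negations {E I : Type} (G : GPEA E) (l r : I ≃ I)
    (hwc : G.lrWC l r) (P : PEA ((I → E) ⊕ (I → E)))
    (hadd : P.add = kiteAdd G l r) (h0 : P.zero = kiteZero E I G)
    (h1 : P.one = kiteOne E I G) (hnt : ∃ a : E, a ≠ G.zero) :
    (∀ a : I → E,
      P.negR (Sum.inr a) = Sum.inl (fun j => a (r j)) ∧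
      P.negL (Sum.inr a) = Sum.inl (fun j => a (l j))) ∧
    (∀ f : I → E,
      P.negR (Sum.inl f) = Sum.inr (fun i => f (l.symm i)) ∧
      P.negL (Sum.inl f) = Sum.inr (fun i => f (r.symm i))) ∧
    ((∀ x : (I → E) ⊕ (I → E), P.negL x = P.negR x) ↔ l = r) := by
  obtain ⟨x0, hx0⟩ := hnt
  have addRA : ∀ a : I → E,
      P.add (Sum.inr a) (Sum.inl fun j => a (r j)) = some P.one := by
    intro a
    rw [hadd, h1]
    show kiteAdd G l r (Sum.inr a) (Sum.inl fun j => a (r j)) = some (kiteOne E I G)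
    have hle : ∀ i, G.le ((fun j => a (r j)) (r.symm i)) (a i) := by
      intro i
      simpa using G.le_refl' (a i)
    simp only [kiteAdd, dif_pos hle]
    show _ = some (Sum.inr fun _ => G.zero)
    exact congrArg (fun g => (some (Sum.inr g) : Option ((I → E) ⊕ (I → E)))) (funext fun i => by simp [G.rsub_self])
  have addLA : ∀ a : I → E,
      P.add (Sum.inl fun j => a (l j)) (Sum.inr a) = some P.one := by
    intro a
    rw [hadd, h1]
    show kiteAdd G l r (Sum.inl fun j => a (l j)) (Sum.inr a) = some (kiteOne E I G)
    have hle : ∀ i, G.le ((fun j => a (l j)) (l.symm i)) (a i) := by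
      intro i
      simpa using G.le_refl' (a i)
    simp only [kiteAdd, dif_pos hle]
    show _ = some (Sum.inr fun _ => G.zero)
    exact congrArg (fun g => (some (Sum.inr g) : Option ((I → E) ⊕ (I → E)))) (funext fun i => by simp [G.lsub_self])
  have addRF : ∀ f : I → E,
      P.add (Sum.inl f) (Sum.inr fun i => f (l.symm i)) = some P.one := by
    intro f
    rw [hadd, h1]
    show kiteAdd G l r (Sum.inl f) (Sum.inr fun i => f (l.symm i)) = some (kiteOne E I G)
    have hle : ∀ i, G.le (f (l.symm i)) ((fun i => f (l.symm i)) i) :=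
      fun i => G.le_refl' _
    simp only [kiteAdd, dif_pos hle]
    show _ = some (Sum.inr fun _ => G.zero)
    exact congrArg (fun g => (some (Sum.inr g) : Option ((I → E) ⊕ (I → E)))) (funext fun i => by simp [G.lsub_self])
  have addLF : ∀ f : I → E,
      P.add (Sum.inr fun i => f (r.symm i)) (Sum.inl f) = some P.one := by
    intro f
    rw [hadd, h1]
    show kiteAdd G l r (Sum.inr fun i => f (r.symm i)) (Sum.inl f) = some (kiteOne E I G)
    have hle : ∀ i, G.le (f (r.symm i)) ((fun i => f (r.symm i)) i) :=
      fun i => G.le_refl' _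
    simp only [kiteAdd, dif_pos hle]
    show _ = some (Sum.inr fun _ => G.zero)
    exact congrArg (fun g => (some (Sum.inr g) : Option ((I → E) ⊕ (I → E)))) (funext fun i => by simp [G.rsub_self])
  have negRinr : ∀ a : I → E, P.negR (Sum.inr a) = Sum.inl fun j => a (r j) :=
    fun a => P.negR_eq _ _ (addRA a)
  have negLinr : ∀ a : I → E, P.negL (Sum.inr a) = Sum.inl fun j => a (l j) :=
    fun a => P.negL_eq _ _ (addLA a)
  have negRinl : ∀ f : I → E, P.negR (Sum.inl f) = Sum.inr fun i => f (l.symm i) :=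
    fun f => P.negR_eq _ _ (addRF f)
  have negLinl : ∀ f : I → E, P.negL (Sum.inl f) = Sum.inr fun i => f (r.symm i) :=
    fun f => P.negL_eq _ _ (addLF f)
  refine ⟨fun a => ⟨negRinr a, negLinr a⟩, fun f => ⟨negRinl f, negLinl f⟩, ?_, ?_⟩
  · intro H
    have key : ∀ i0 : I, r.symm i0 = l.symm i0 := by
      intro i0
      have h := H (Sum.inl fun k => if k = l.symm i0 then x0 else G.zero)
      rw [negRinl, negLinl] at h
      have h2 := Sum.inr.inj h
      have h3 := congrFun h2 i0
      simp only [if_pos rfl] at h3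
      by_contra hne
      rw [if_neg hne] at h3
      exact hx0 h3.symm
    ext j
    have h := key (r j)
    simp only [Equiv.symm_apply_apply] at h
    exact ((Equiv.symm_apply_eq l).mp h.symm).symm
  · intro h
    subst h
    intro x
    cases x with
    | inl f => rw [negRinl, negLinl]
    | inr a => rw [negRinr, negLinr]
end

section
/- Let E be a GPEA in which + is total and which satisfies RDP (respectively RDP₁, RDP₂). Then for any set I and bijections λ,ρ : I → I, the kite pseudo effect algebra K_I^{λ,ρ}(E) satisfies RDP (respectively RDP₁, RDP₂). -/
open scoped Classical

section KiteInfra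

variable {E I : Type} (G : GPEA E) (htot : ∀ a b : E, (G.add a b).isSome)
include htot

/-- The total addition on `E` induced by `htot`. -/
noncomputable def gadd (a b : E) : E := (G.add a b).get (htot a b)

lemma gadd_spec (a b : E) : G.add a b = some (gadd G htot a b) :=
  (Option.some_get (htot a b)).symm

lemma gadd_eq {a b c : E} (h : G.add a b = some c) : gadd G htot a b = c :=
  Option.some.inj ((gadd_spec G htot a b).symm.trans h)

lemma gadd_some {a b c : E} (h : gadd G htot a b = c) : G.add a b = some c :=
  h ▸ gadd_spec G htot a b

lemma gassoc (a b c : E) :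
    gadd G htot (gadd G htot a b) c = gadd G htot a (gadd G htot b c) := by
  have h := G.assoc_eq a b c _ _ (gadd_spec G htot a b) (gadd_spec G htot b c)
  have h1 := gadd_spec G htot (gadd G htot a b) c
  have h2 := gadd_spec G htot a (gadd G htot b c)
  rw [h1, h2] at h
  exact Option.some.inj h

lemma gcancel_left {a b c : E} (h : gadd G htot a b = gadd G htot a c) : b = c :=
  G.cancel_left a b c (gadd G htot a c) (h ▸ gadd_spec G htot a b) (gadd_spec G htot a c)

lemma gcancel_right {a b c : E} (h : gadd G htot b a = gadd G htot c a) : b = c :=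
  G.cancel_right a b c (gadd G htot c a) (h ▸ gadd_spec G htot b a) (gadd_spec G htot c a)

/-- Any refinement matrix in a cancellative total monoid has commuting antidiagonal. -/
lemma comm_anti {a1 a2 b1 b2 c11 c12 c21 c22 : E}
    (hx : gadd G htot a1 a2 = gadd G htot b1 b2)
    (h1 : gadd G htot c11 c12 = a1) (h2 : gadd G htot c21 c22 = a2)
    (h3 : gadd G htot c11 c21 = b1) (h4 : gadd G htot c12 c22 = b2) :
    gadd G htot c12 c21 = gadd G htot c21 c12 := by
  have key : gadd G htot c11 (gadd G htot (gadd G htot c12 c21) c22)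
      = gadd G htot c11 (gadd G htot (gadd G htot c21 c12) c22) := by
    calc gadd G htot c11 (gadd G htot (gadd G htot c12 c21) c22)
        = gadd G htot c11 (gadd G htot c12 (gadd G htot c21 c22)) := by rw [gassoc]
      _ = gadd G htot (gadd G htot c11 c12) (gadd G htot c21 c22) := by rw [gassoc]
      _ = gadd G htot a1 a2 := by rw [h1, h2]
      _ = gadd G htot b1 b2 := hx
      _ = gadd G htot (gadd G htot c11 c21) (gadd G htot c12 c22) := by rw [h3, h4]
      _ = gadd G htot c11 (gadd G htot c21 (gadd G htot c12 c22)) := by rw [gassoc]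
      _ = gadd G htot c11 (gadd G htot (gadd G htot c21 c12) c22) := by rw [gassoc]
  exact gcancel_right G htot (gcancel_left G htot key)

/-- Case-A key lemma (left kite case). -/
lemma caseA (Φ : E → E → Prop)
    (hR : ∀ a1 a2 b1 b2 x : E, G.add a1 a2 = some x → G.add b1 b2 = some x →
      ∃ c11 c12 c21 c22 : E, G.add c11 c12 = some a1 ∧ G.add c21 c22 = some a2 ∧
        G.add c11 c21 = some b1 ∧ G.add c12 c22 = some b2 ∧ Φ c12 c21)
    (p q : E) :
    ∃ h11 h12 h21 : E, gadd G htot h11 h12 = p ∧ gadd G htot h11 h21 = q ∧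
      gadd G htot p h21 = gadd G htot q h12 ∧ Φ h12 h21 := by
  obtain ⟨e, he⟩ := (G.exch q p (gadd G htot q p) (gadd_spec G htot q p)).2
  obtain ⟨c11, c12, c21, c22, h1, h2, h3, h4, hphi⟩ :=
    hR p e q p (gadd G htot q p) he (gadd_spec G htot q p)
  have h1' := gadd_eq G htot h1
  have h2' := gadd_eq G htot h2
  have h3' := gadd_eq G htot h3
  have h4' := gadd_eq G htot h4
  have hx : gadd G htot p e = gadd G htot q p := gadd_eq G htot he
  have hcomm := comm_anti G htot hx h1' h2' h3' h4'
  refine ⟨c11, c12, c21, h1', h3', ?_, hphi⟩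
  calc gadd G htot p c21 = gadd G htot (gadd G htot c11 c12) c21 := by rw [h1']
    _ = gadd G htot c11 (gadd G htot c12 c21) := gassoc G htot _ _ _
    _ = gadd G htot c11 (gadd G htot c21 c12) := by rw [hcomm]
    _ = gadd G htot (gadd G htot c11 c21) c12 := (gassoc G htot _ _ _).symm
    _ = gadd G htot q c12 := by rw [h3']

/-- Case-B key lemma (right kite case). -/
lemma caseB (Φ : E → E → Prop)
    (hR : ∀ a1 a2 b1 b2 x : E, G.add a1 a2 = some x → G.add b1 b2 = some x →
      ∃ c11 c12 c21 c22 : E, G.add c11 c12 = some a1 ∧ G.add c21 c22 = some a2 ∧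
        G.add c11 c21 = some b1 ∧ G.add c12 c22 = some b2 ∧ Φ c12 c21)
    (p q : E) :
    ∃ h12 h21 h22 : E, gadd G htot h21 h22 = p ∧ gadd G htot h12 h22 = q ∧
      gadd G htot h12 p = gadd G htot h21 q ∧ Φ h12 h21 := by
  obtain ⟨e, he⟩ := (G.exch p q (gadd G htot p q) (gadd_spec G htot p q)).1
  obtain ⟨c11, c12, c21, c22, h1, h2, h3, h4, hphi⟩ :=
    hR e p p q (gadd G htot p q) he (gadd_spec G htot p q)
  have h1' := gadd_eq G htot h1
  have h2' := gadd_eq G htot h2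
  have h3' := gadd_eq G htot h3
  have h4' := gadd_eq G htot h4
  have hx : gadd G htot e p = gadd G htot p q := gadd_eq G htot he
  have hcomm := comm_anti G htot hx h1' h2' h3' h4'
  refine ⟨c12, c21, c22, h2', h4', ?_, hphi⟩
  calc gadd G htot c12 p = gadd G htot c12 (gadd G htot c21 c22) := by rw [h2']
    _ = gadd G htot (gadd G htot c12 c21) c22 := (gassoc G htot _ _ _).symm
    _ = gadd G htot (gadd G htot c21 c12) c22 := by rw [hcomm]
    _ = gadd G htot c21 (gadd G htot c12 c22) := gassoc G htot _ _ _
    _ = gadd G htot c21 q := by rw [h4']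

omit htot in
lemma lsub_eq {b x c : E} (h : G.add c x = some b) : G.lsub b x = c := by
  have hex : ∃ c', G.add c' x = some b := ⟨c, h⟩
  rw [GPEA.lsub, dif_pos hex]
  exact G.cancel_right x _ c b hex.choose_spec h

omit htot in
lemma rsub_eq {b x c : E} (h : G.add x c = some b) : G.rsub x b = c := by
  have hex : ∃ c', G.add x c' = some b := ⟨c, h⟩
  rw [GPEA.rsub, dif_pos hex]
  exact G.cancel_left x _ c b hex.choose_spec h

omit htot in
lemma lsub_spec {b x : E} (hex : ∃ c, G.add c x = some b) :
    G.add (G.lsub b x) x = some b := by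
  rw [GPEA.lsub, dif_pos hex]; exact hex.choose_spec

omit htot in
lemma rsub_spec {b x : E} (hex : ∃ c, G.add x c = some b) :
    G.add x (G.rsub x b) = some b := by
  rw [GPEA.rsub, dif_pos hex]; exact hex.choose_spec

variable (l r : I ≃ I)

lemma mk_ll {u v w : I → E} (h : ∀ j, G.add (u j) (v j) = some (w j)) :
    kiteAdd G l r (Sum.inl u) (Sum.inl v) = some (Sum.inl w) := by
  rw [kiteAdd, dif_pos (fun j => htot (u j) (v j))]
  refine congrArg some (congrArg Sum.inl (funext fun j => ?_))
  exact Option.some.inj ((Option.some_get _).trans (h j))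

lemma mk_lr {f a c : I → E} (h : ∀ i, G.add (c i) (f (l.symm i)) = some (a i)) :
    kiteAdd G l r (Sum.inl f) (Sum.inr a) = some (Sum.inr c) := by
  have hcond : ∀ i, G.le (f (l.symm i)) (a i) := fun i => (G.exch _ _ _ (h i)).2
  rw [kiteAdd, dif_pos hcond]
  exact congrArg some (congrArg Sum.inr (funext fun i => lsub_eq G (h i)))

lemma mk_rl {f a c : I → E} (h : ∀ i, G.add (f (r.symm i)) (c i) = some (a i)) :
    kiteAdd G l r (Sum.inr a) (Sum.inl f) = some (Sum.inr c) := by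
  have hcond : ∀ i, G.le (f (r.symm i)) (a i) := fun i => ⟨c i, h i⟩
  rw [kiteAdd, dif_pos hcond]
  exact congrArg some (congrArg Sum.inr (funext fun i => rsub_eq G (h i)))

lemma dest_inl {u v : (I → E) ⊕ (I → E)} {t : I → E}
    (h : kiteAdd G l r u v = some (Sum.inl t)) :
    ∃ f g, u = Sum.inl f ∧ v = Sum.inl g ∧ ∀ j, G.add (f j) (g j) = some (t j) := by
  rcases u with f | a <;> rcases v with g | b
  · rw [kiteAdd, dif_pos (fun j => htot (f j) (g j))] at h
    have ht := Sum.inl.inj (Option.some.inj h)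
    refine ⟨f, g, rfl, rfl, fun j => ?_⟩
    rw [← congrFun ht j]
    exact (Option.some_get _).symm
  · rw [kiteAdd] at h; split at h <;> simp_all
  · rw [kiteAdd] at h; split at h <;> simp_all
  · rw [kiteAdd] at h; simp_all

lemma dest_inr {u v : (I → E) ⊕ (I → E)} {t : I → E}
    (h : kiteAdd G l r u v = some (Sum.inr t)) :
    (∃ f a, u = Sum.inl f ∧ v = Sum.inr a ∧
      ∀ i, G.add (t i) (f (l.symm i)) = some (a i)) ∨
    (∃ f a, u = Sum.inr a ∧ v = Sum.inl f ∧
      ∀ i, G.add (f (r.symm i)) (t i) = some (a i)) := by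
  rcases u with f | a <;> rcases v with g | b
  · rw [kiteAdd, dif_pos (fun j => htot (f j) (g j))] at h; simp_all
  · left
    rw [kiteAdd] at h
    split at h
    case isTrue hcond =>
      have ht := Sum.inr.inj (Option.some.inj h)
      refine ⟨f, b, rfl, rfl, fun i => ?_⟩
      obtain ⟨c, hc⟩ := hcond i
      have hex : ∃ c', G.add c' (f (l.symm i)) = some (b i) :=
        (G.exch _ _ _ hc).1
      rw [← congrFun ht i]
      exact lsub_spec G hex
    case isFalse => exact absurd h (by simp)
  · right
    rw [kiteAdd] at h
    split at h
    case isTrue hcond =>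
      have ht := Sum.inr.inj (Option.some.inj h)
      refine ⟨g, a, rfl, rfl, fun i => ?_⟩
      rw [← congrFun ht i]
      exact rsub_spec G (hcond i)
    case isFalse => exact absurd h (by simp)
  · rw [kiteAdd] at h; simp_all

lemma le_inl {u : (I → E) ⊕ (I → E)} {h' : I → E}
    (hle : ∃ c, kiteAdd G l r u c = some (Sum.inl h')) :
    ∃ u', u = Sum.inl u' ∧ ∀ j, G.le (u' j) (h' j) := by
  obtain ⟨c, hc⟩ := hle
  obtain ⟨f, g, rfl, rfl, hfg⟩ := dest_inl G htot l r hc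
  exact ⟨f, rfl, fun j => ⟨g j, hfg j⟩⟩

lemma le_kzero {u : (I → E) ⊕ (I → E)}
    (hle : ∃ c, kiteAdd G l r u c = some (Sum.inl (fun _ => G.zero))) :
    u = Sum.inl (fun _ : I => G.zero) := by
  obtain ⟨u', rfl, hu⟩ := le_inl G htot l r hle
  refine congrArg Sum.inl (funext fun j => ?_)
  obtain ⟨c, hc⟩ := hu j
  exact (G.pos _ _ hc).1

lemma kzero_add (v : (I → E) ⊕ (I → E)) :
    kiteAdd G l r (Sum.inl fun _ => G.zero) v = kiteAdd G l r v (Sum.inl fun _ => G.zero) := by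
  rcases v with g | b
  · rw [mk_ll G htot l r (fun j => G.zero_add (g j)),
      mk_ll G htot l r (fun j => G.add_zero (g j))]
  · rw [mk_lr G htot l r (fun i => G.add_zero (b i)),
      mk_rl G htot l r (fun i => G.zero_add (b i))]

/-- The generic kite refinement lemma. -/
lemma kite_refines (Φ : E → E → Prop) (Ψ : (I → E) ⊕ (I → E) → (I → E) ⊕ (I → E) → Prop)
    (hR : ∀ a1 a2 b1 b2 x : E, G.add a1 a2 = some x → G.add b1 b2 = some x →
      ∃ c11 c12 c21 c22 : E, G.add c11 c12 = some a1 ∧ G.add c21 c22 = some a2 ∧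
        G.add c11 c21 = some b1 ∧ G.add c12 c22 = some b2 ∧ Φ c12 c21)
    (cL : ∀ h12 h21 : I → E, (∀ j, Φ (h12 j) (h21 j)) → Ψ (Sum.inl h12) (Sum.inl h21))
    (cZ1 : ∀ x, Ψ (Sum.inl fun _ => G.zero) x)
    (cZ2 : ∀ x, Ψ x (Sum.inl fun _ => G.zero)) :
    ∀ a1 a2 b1 b2 x, kiteAdd G l r a1 a2 = some x → kiteAdd G l r b1 b2 = some x →
      ∃ c11 c12 c21 c22, kiteAdd G l r c11 c12 = some a1 ∧
        kiteAdd G l r c21 c22 = some a2 ∧ kiteAdd G l r c11 c21 = some b1 ∧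
        kiteAdd G l r c12 c22 = some b2 ∧ Ψ c12 c21 := by
  intro a1 a2 b1 b2 x ha hb
  rcases x with t | t
  · obtain ⟨f1, f2, rfl, rfl, hf⟩ := dest_inl G htot l r ha
    obtain ⟨g1, g2, rfl, rfl, hg⟩ := dest_inl G htot l r hb
    choose c11 c12 c21 c22 h1 h2 h3 h4 h5 using
      fun j => hR (f1 j) (f2 j) (g1 j) (g2 j) (t j) (hf j) (hg j)
    exact ⟨Sum.inl c11, Sum.inl c12, Sum.inl c21, Sum.inl c22,
      mk_ll G htot l r h1, mk_ll G htot l r h2, mk_ll G htot l r h3,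
      mk_ll G htot l r h4, cL _ _ h5⟩
  · rcases dest_inr G htot l r ha with ⟨f, a, rfl, rfl, hfa⟩ | ⟨f, a, rfl, rfl, haf⟩ <;>
      rcases dest_inr G htot l r hb with ⟨g, b, rfl, rfl, hgb⟩ | ⟨g, b, rfl, rfl, hbg⟩
    · -- case (1): a = (L,R), b = (L,R)
      choose h11 h12 h21 k1 k2 k3 k4 using fun j => caseA G htot Φ hR (f j) (g j)
      refine ⟨Sum.inl h11, Sum.inl h12, Sum.inl h21,
        Sum.inr (fun i => gadd G htot (a i) (h21 (l.symm i))),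
        mk_ll G htot l r (fun j => gadd_some G htot (k1 j)),
        mk_lr G htot l r (fun i => gadd_spec G htot (a i) (h21 (l.symm i))),
        mk_ll G htot l r (fun j => gadd_some G htot (k2 j)),
        mk_lr G htot l r (fun i => gadd_some G htot ?_), cL _ _ k4⟩
      have haeq : a i = gadd G htot (t i) (f (l.symm i)) := (gadd_eq G htot (hfa i)).symm
      have hbeq : b i = gadd G htot (t i) (g (l.symm i)) := (gadd_eq G htot (hgb i)).symm
      rw [haeq, hbeq, gassoc, gassoc, k3 (l.symm i)]
    · -- case (2): a = (L,R), b = (R,L)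
      refine ⟨Sum.inl f, Sum.inl (fun _ => G.zero), Sum.inr (fun i => gadd G htot (g (r.symm i)) (a i)),
        Sum.inl g,
        mk_ll G htot l r (fun j => G.add_zero (f j)),
        mk_rl G htot l r (fun i => gadd_spec G htot (g (r.symm i)) (a i)),
        mk_lr G htot l r (fun i => gadd_some G htot ?_),
        mk_ll G htot l r (fun j => G.zero_add (g j)), cZ1 _⟩
      have haeq : a i = gadd G htot (t i) (f (l.symm i)) := (gadd_eq G htot (hfa i)).symm
      have hbeq : b i = gadd G htot (g (r.symm i)) (t i) := (gadd_eq G htot (hbg i)).symm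
      rw [haeq, hbeq, ← gassoc]
    · -- case (3): a = (R,L), b = (L,R)
      refine ⟨Sum.inl g, Sum.inr (fun i => gadd G htot (a i) (g (l.symm i))),
        Sum.inl (fun _ => G.zero), Sum.inl f,
        mk_lr G htot l r (fun i => gadd_spec G htot (a i) (g (l.symm i))),
        mk_ll G htot l r (fun j => G.zero_add (f j)),
        mk_ll G htot l r (fun j => G.add_zero (g j)),
        mk_rl G htot l r (fun i => gadd_some G htot ?_), cZ2 _⟩
      have haeq : a i = gadd G htot (f (r.symm i)) (t i) := (gadd_eq G htot (haf i)).symm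
      have hbeq : b i = gadd G htot (t i) (g (l.symm i)) := (gadd_eq G htot (hgb i)).symm
      rw [haeq, hbeq, gassoc]
    · -- case (4): a = (R,L), b = (R,L)
      choose h12 h21 h22 k1 k2 k3 k4 using fun j => caseB G htot Φ hR (f j) (g j)
      refine ⟨Sum.inr (fun i => gadd G htot (h12 (r.symm i)) (a i)),
        Sum.inl h12, Sum.inl h21, Sum.inl h22,
        mk_rl G htot l r (fun i => gadd_spec G htot (h12 (r.symm i)) (a i)),
        mk_ll G htot l r (fun j => gadd_some G htot (k1 j)),
        mk_rl G htot l r (fun i => gadd_some G htot ?_),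
        mk_ll G htot l r (fun j => gadd_some G htot (k2 j)), cL _ _ k4⟩
      have haeq : a i = gadd G htot (f (r.symm i)) (t i) := (gadd_eq G htot (haf i)).symm
      have hbeq : b i = gadd G htot (g (r.symm i)) (t i) := (gadd_eq G htot (hbg i)).symm
      rw [haeq, hbeq, ← gassoc, ← gassoc, k3 (r.symm i)]

end KiteInfra

/-- If `+` is total on the GPEA `E` and `E` satisfies RDP
(resp. RDP₁, RDP₂), then the kite `K_I^{λ,ρ}(E)` satisfies RDP
(resp. RDP₁, RDP₂). -/
theorem kite_rdp_up {E I : Type} (G : GPEA E)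
    (htot : ∀ a b : E, (G.add a b).isSome) (l r : I ≃ I)
    (P : PEA ((I → E) ⊕ (I → E)))
    (hadd : P.add = kiteAdd G l r) (h0 : P.zero = kiteZero E I G)
    (h1 : P.one = kiteOne E I G) :
    (G.RDP → P.RDP) ∧ (G.RDP1 → P.RDP1) ∧ (G.RDP2 → P.RDP2) := by
  refine ⟨fun hG => ?_, fun hG => ?_, fun hG => ?_⟩
  · -- RDP
    intro a1 a2 b1 b2 x ha hb
    rw [hadd] at ha hb
    obtain ⟨c11, c12, c21, c22, e1, e2, e3, e4, -⟩ :=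
      kite_refines G htot l r (fun _ _ => True) (fun _ _ => True)
        (fun a1 a2 b1 b2 x ha hb => by
          obtain ⟨c11, c12, c21, c22, u1, u2, u3, u4⟩ := hG a1 a2 b1 b2 x ha hb
          exact ⟨c11, c12, c21, c22, u1, u2, u3, u4, trivial⟩)
        (fun _ _ _ => trivial) (fun _ => trivial) (fun _ => trivial)
        a1 a2 b1 b2 x ha hb
    exact ⟨c11, c12, c21, c22, by rw [hadd]; exact e1, by rw [hadd]; exact e2,
      by rw [hadd]; exact e3, by rw [hadd]; exact e4⟩
  · -- RDP1
    intro a1 a2 b1 b2 x ha hb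
    rw [hadd] at ha hb
    obtain ⟨c11, c12, c21, c22, e1, e2, e3, e4, e5⟩ :=
      kite_refines G htot l r
        (fun p q => ∀ u v : E, G.le u p → G.le v q → G.add u v = G.add v u)
        (fun p q => ∀ u v, P.le u p → P.le v q → P.add u v = P.add v u)
        hG
        (fun h12 h21 hphi u v hu hv => by
          rw [PEA.le, hadd] at hu hv
          obtain ⟨u', rfl, hu'⟩ := le_inl G htot l r hu
          obtain ⟨v', rfl, hv'⟩ := le_inl G htot l r hv
          rw [hadd, mk_ll G htot l r (fun j => gadd_spec G htot (u' j) (v' j)),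
            mk_ll G htot l r (fun j => gadd_spec G htot (v' j) (u' j))]
          exact congrArg some (congrArg Sum.inl (funext fun j =>
            gadd_eq G htot ((hphi j (u' j) (v' j) (hu' j) (hv' j)).trans
              (gadd_spec G htot (v' j) (u' j))))))
        (fun x u v hu _ => by
          rw [PEA.le, hadd] at hu
          rw [le_kzero G htot l r hu, hadd]
          exact kzero_add G htot l r v)
        (fun x u v _ hv => by
          rw [PEA.le, hadd] at hv
          rw [le_kzero G htot l r hv, hadd]
          exact (kzero_add G htot l r u).symm)
        a1 a2 b1 b2 x ha hb
    exact ⟨c11, c12, c21, c22, by rw [hadd]; exact e1, by rw [hadd]; exact e2,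
      by rw [hadd]; exact e3, by rw [hadd]; exact e4, e5⟩
  · -- RDP2
    intro a1 a2 b1 b2 x ha hb
    rw [hadd] at ha hb
    obtain ⟨c11, c12, c21, c22, e1, e2, e3, e4, e5⟩ :=
      kite_refines G htot l r
        (fun p q => ∀ z : E, G.le z p → G.le z q → z = G.zero)
        (fun p q => ∀ z, P.le z p → P.le z q → z = P.zero)
        hG
        (fun h12 h21 hphi z hz1 hz2 => by
          rw [PEA.le, hadd] at hz1 hz2
          obtain ⟨z', rfl, hz1'⟩ := le_inl G htot l r hz1
          obtain ⟨z'', hz, hz2'⟩ := le_inl G htot l r hz2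
          obtain rfl : z' = z'' := Sum.inl.inj hz
          rw [h0]
          exact congrArg Sum.inl (funext fun j => hphi j (z' j) (hz1' j) (hz2' j)))
        (fun x z hz1 _ => by
          rw [PEA.le, hadd] at hz1
          rw [le_kzero G htot l r hz1, h0]; rfl)
        (fun x z _ hz2 => by
          rw [PEA.le, hadd] at hz2
          rw [le_kzero G htot l r hz2, h0]; rfl)
        a1 a2 b1 b2 x ha hb
    exact ⟨c11, c12, c21, c22, by rw [hadd]; exact e1, by rw [hadd]; exact e2,
      by rw [hadd]; exact e3, by rw [hadd]; exact e4, e5⟩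
end

section
/- Let H be a normal ideal of a directed λ,ρ-weakly commutative GPEA E. Then H^I := {⟨f_j : j ∈ I⟩ : f_j ∈ H for all j} is a normal ideal of the kite pseudo effect algebra K_I^{λ,ρ}(E). In particular, E^I (the lower part of the kite) is a maximal ideal of K_I^{λ,ρ}(E). -/
open scoped Classical

/-! In the kite, the lower part `E^I` adds coordinatewise, and adding a lower element `f` to an
upper element `ā` on either side subtracts `f` coordinatewise from `a`, after reindexing by `ρ`
(on the right) or by `λ` (on the left). Normality of `H^I` is therefore normality of `H`, applied
coordinatewise. For maximality, an ideal containing `E^I` and some upper element `ā` contains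
every upper element `b̄`: if `u` is a common upper bound of `a` and `b` in `E`, then `ū ≤ ā`,
and `b̄` is the sum of a lower element and `ū`. -/

namespace GPEA

variable {E : Type} {G : GPEA E} {a b c : E}

theorem rsub_eq_of_add_eq (h : G.add a c = some b) : G.rsub a b = c := by
  have hex : ∃ c, G.add a c = some b := ⟨c, h⟩
  rw [rsub, dif_pos hex]
  exact G.cancel_left _ _ _ _ hex.choose_spec h

theorem add_rsub (h : G.le a b) : G.add a (G.rsub a b) = some b := by
  have hex : ∃ c, G.add a c = some b := h
  rw [rsub, dif_pos hex]
  exact hex.choose_spec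

theorem lsub_eq_of_add_eq (h : G.add c a = some b) : G.lsub b a = c := by
  have hex : ∃ c, G.add c a = some b := ⟨c, h⟩
  rw [lsub, dif_pos hex]
  exact G.cancel_right _ _ _ _ hex.choose_spec h

theorem lsub_add (h : G.le a b) : G.add (G.lsub b a) a = some b := by
  have hex : ∃ c, G.add c a = some b := (G.exch _ _ _ h.choose_spec).1
  rw [lsub, dif_pos hex]
  exact hex.choose_spec

theorem isIdeal_univ : G.isIdeal Set.univ :=
  ⟨trivial, fun _ _ _ _ _ _ => trivial, fun _ _ _ _ => trivial⟩

theorem isNormalIdeal.exists_mem_add_eq {H : Set E} (hH : G.isNormalIdeal H) {x y z : E}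
    (hy : y ∈ H) (h : G.add x y = some z) : ∃ y' ∈ H, G.add y' x = some z :=
  (hH.2 x).subset ⟨y, hy, h⟩

theorem isNormalIdeal.exists_add_mem_eq {H : Set E} (hH : G.isNormalIdeal H) {x y z : E}
    (hy : y ∈ H) (h : G.add y x = some z) : ∃ y' ∈ H, G.add x y' = some z :=
  (hH.2 x).symm.subset ⟨y, hy, h⟩

end GPEA

section Kite

variable {E I : Type} {G : GPEA E} {l r : I ≃ I}

theorem kiteAdd_inl_inl_eq_some {f g : I → E} {z : (I → E) ⊕ (I → E)} :
    kiteAdd G l r (.inl f) (.inl g) = some z ↔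
      ∃ h, z = .inl h ∧ ∀ j, G.add (f j) (g j) = some (h j) := by
  constructor
  · intro hz
    simp only [kiteAdd] at hz
    split_ifs at hz with hfg
    exact ⟨_, (Option.some_injective _ hz).symm, fun j => (Option.some_get (hfg j)).symm⟩
  · rintro ⟨h, rfl, hfg⟩
    simp [kiteAdd, hfg]

theorem kiteAdd_inr_inl_eq_some {a f : I → E} {z : (I → E) ⊕ (I → E)} :
    kiteAdd G l r (.inr a) (.inl f) = some z ↔
      ∃ b, z = .inr b ∧ ∀ i, G.add (f (r.symm i)) (b i) = some (a i) := by
  constructor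
  · intro hz
    simp only [kiteAdd] at hz
    split_ifs at hz with hle
    exact ⟨_, (Option.some_injective _ hz).symm, fun i => GPEA.add_rsub (hle i)⟩
  · rintro ⟨b, rfl, hfb⟩
    have hle : ∀ i, G.le (f (r.symm i)) (a i) := fun i => ⟨b i, hfb i⟩
    simp [kiteAdd, dif_pos hle, GPEA.rsub_eq_of_add_eq (hfb _)]

theorem kiteAdd_inl_inr_eq_some {f a : I → E} {z : (I → E) ⊕ (I → E)} :
    kiteAdd G l r (.inl f) (.inr a) = some z ↔
      ∃ b, z = .inr b ∧ ∀ i, G.add (b i) (f (l.symm i)) = some (a i) := by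
  constructor
  · intro hz
    simp only [kiteAdd] at hz
    split_ifs at hz with hle
    exact ⟨_, (Option.some_injective _ hz).symm, fun i => GPEA.lsub_add (hle i)⟩
  · rintro ⟨b, rfl, hbf⟩
    have hle : ∀ i, G.le (f (l.symm i)) (a i) := fun i => (G.exch _ _ _ (hbf i)).2
    simp [kiteAdd, dif_pos hle, GPEA.lsub_eq_of_add_eq (hbf _)]

theorem kiteAdd_eq_some_inl {x y : (I → E) ⊕ (I → E)} {h : I → E}
    (hxy : kiteAdd G l r x y = some (.inl h)) :
    ∃ f g, x = .inl f ∧ y = .inl g ∧ ∀ j, G.add (f j) (g j) = some (h j) := by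
  rcases x with f | a <;> rcases y with g | b
  · obtain ⟨h', hh', hfg⟩ := kiteAdd_inl_inl_eq_some.1 hxy
    cases hh'
    exact ⟨f, g, rfl, rfl, hfg⟩
  · obtain ⟨_, h', _⟩ := kiteAdd_inl_inr_eq_some.1 hxy
    cases h'
  · obtain ⟨_, h', _⟩ := kiteAdd_inr_inl_eq_some.1 hxy
    cases h'
  · cases hxy

/-- `H^I`, inside the lower part of the kite. -/
def kitePow (H : Set E) : Set ((I → E) ⊕ (I → E)) :=
  {x | ∃ f : I → E, x = Sum.inl f ∧ ∀ j, f j ∈ H}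

theorem kitePow_univ : kitePow (I := I) (Set.univ : Set E) = {x | ∃ f : I → E, x = Sum.inl f} := by
  ext x
  simp [kitePow]

theorem kitePow_exists_mem_add_eq {H : Set E} (hH : G.isNormalIdeal H)
    {x y z : (I → E) ⊕ (I → E)} (hy : y ∈ kitePow H) (hxy : kiteAdd G l r x y = some z) :
    ∃ y' ∈ kitePow H, kiteAdd G l r y' x = some z := by
  obtain ⟨k, rfl, hk⟩ := hy
  rcases x with f | a
  · obtain ⟨h, rfl, hfk⟩ := kiteAdd_inl_inl_eq_some.1 hxy
    choose w hw hwf using fun j => hH.exists_mem_add_eq (hk j) (hfk j)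
    exact ⟨.inl w, ⟨w, rfl, hw⟩, kiteAdd_inl_inl_eq_some.2 ⟨h, rfl, hwf⟩⟩
  · obtain ⟨b, rfl, hkb⟩ := kiteAdd_inr_inl_eq_some.1 hxy
    choose w hw hbw using fun i => hH.exists_add_mem_eq (hk _) (hkb i)
    refine ⟨.inl (w ∘ l), ⟨_, rfl, fun j => hw (l j)⟩, kiteAdd_inl_inr_eq_some.2 ⟨b, rfl, ?_⟩⟩
    simpa using hbw

theorem kitePow_exists_add_mem_eq {H : Set E} (hH : G.isNormalIdeal H)
    {x y z : (I → E) ⊕ (I → E)} (hy : y ∈ kitePow H) (hyx : kiteAdd G l r y x = some z) :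
    ∃ y' ∈ kitePow H, kiteAdd G l r x y' = some z := by
  obtain ⟨k, rfl, hk⟩ := hy
  rcases x with f | a
  · obtain ⟨h, rfl, hkf⟩ := kiteAdd_inl_inl_eq_some.1 hyx
    choose w hw hfw using fun j => hH.exists_add_mem_eq (hk j) (hkf j)
    exact ⟨.inl w, ⟨w, rfl, hw⟩, kiteAdd_inl_inl_eq_some.2 ⟨h, rfl, hfw⟩⟩
  · obtain ⟨b, rfl, hbk⟩ := kiteAdd_inl_inr_eq_some.1 hyx
    choose w hw hwb using fun i => hH.exists_mem_add_eq (hk _) (hbk i)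
    refine ⟨.inl (w ∘ r), ⟨_, rfl, fun j => hw (r j)⟩, kiteAdd_inr_inl_eq_some.2 ⟨b, rfl, ?_⟩⟩
    simpa using hwb

variable {P : PEA ((I → E) ⊕ (I → E))}

theorem isIdeal_kitePow (hadd : P.add = kiteAdd G l r) (h0 : P.zero = kiteZero E I G)
    {H : Set E} (hH : G.isIdeal H) : P.isIdeal (kitePow H) := by
  refine ⟨⟨_, h0, fun _ => hH.1⟩, ?_, ?_⟩
  · rintro _ _ z ⟨f, rfl, hf⟩ ⟨g, rfl, hg⟩ hfg
    rw [hadd, kiteAdd_inl_inl_eq_some] at hfg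
    obtain ⟨h, rfl, hfg⟩ := hfg
    exact ⟨h, rfl, fun j => hH.2.1 _ _ _ (hf j) (hg j) (hfg j)⟩
  · rintro x _ ⟨c, hxc⟩ ⟨g, rfl, hg⟩
    rw [hadd] at hxc
    obtain ⟨f, k, rfl, -, hfk⟩ := kiteAdd_eq_some_inl hxc
    exact ⟨f, rfl, fun j => hH.2.2 _ _ ⟨k j, hfk j⟩ (hg j)⟩

theorem isNormalIdeal_kitePow (hadd : P.add = kiteAdd G l r) (h0 : P.zero = kiteZero E I G)
    {H : Set E} (hH : G.isNormalIdeal H) : P.isNormalIdeal (kitePow H) := by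
  refine ⟨isIdeal_kitePow hadd h0 hH.1, fun x => Set.ext fun z => ⟨?_, ?_⟩⟩ <;>
    rintro ⟨y, hy, hz⟩ <;> rw [hadd] at hz ⊢
  exacts [kitePow_exists_mem_add_eq hH hy hz, kitePow_exists_add_mem_eq hH hy hz]

theorem kite_inr_mem_of_inr_mem (hdir : G.directed) (hadd : P.add = kiteAdd G l r)
    {B : Set ((I → E) ⊕ (I → E))} (hB : P.isIdeal B) (hlower : ∀ f, Sum.inl f ∈ B)
    {a : I → E} (ha : .inr a ∈ B) (b : I → E) : .inr b ∈ B := by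
  have hbound : ∀ i, ∃ u d t, G.add d (a i) = some u ∧ G.add (b i) t = some u := fun i => by
    obtain ⟨u, ⟨s, hs⟩, t, ht⟩ := hdir (a i) (b i)
    obtain ⟨d, hd⟩ := (G.exch _ _ _ hs).1
    exact ⟨u, d, t, hd, ht⟩
  choose u d t hd ht using hbound
  have hu : .inr u ∈ B := by
    refine hB.2.2 _ _ ⟨.inl (d ∘ r), ?_⟩ ha
    rw [hadd, kiteAdd_inr_inl_eq_some]
    exact ⟨a, rfl, by simpa using hd⟩
  refine hB.2.1 _ _ _ (hlower (t ∘ l)) hu ?_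
  rw [hadd, kiteAdd_inl_inr_eq_some]
  exact ⟨b, rfl, by simpa using ht⟩

theorem isMaximalIdeal_kiteLower (hdir : G.directed) (hadd : P.add = kiteAdd G l r)
    (h0 : P.zero = kiteZero E I G) : P.isMaximalIdeal {x | ∃ f : I → E, x = Sum.inl f} := by
  refine ⟨kitePow_univ ▸ isIdeal_kitePow hadd h0 GPEA.isIdeal_univ, fun huniv => ?_,
    fun B hB hsub => ?_⟩
  · obtain ⟨f, hf⟩ : (Sum.inr fun _ => G.zero : (I → E) ⊕ (I → E)) ∈ {x | ∃ f, x = Sum.inl f} :=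
      huniv ▸ Set.mem_univ _
    cases hf
  · by_cases hB' : B ⊆ {x | ∃ f : I → E, x = Sum.inl f}
    · exact .inl (hB'.antisymm hsub)
    obtain ⟨x, hxB, hx⟩ := Set.not_subset.1 hB'
    obtain ⟨a, rfl⟩ : ∃ a, x = .inr a := by
      rcases x with f | a
      exacts [absurd ⟨f, rfl⟩ hx, ⟨a, rfl⟩]
    refine .inr (Set.eq_univ_of_forall ?_)
    rintro (f | b)
    exacts [hsub ⟨f, rfl⟩, kite_inr_mem_of_inr_mem hdir hadd hB (fun f => hsub ⟨f, rfl⟩) hxB b]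

end Kite

theorem kite_normal_ideal_general {E I : Type} (G : GPEA E) (l r : I ≃ I)
    (hdir : G.directed)
    (P : PEA ((I → E) ⊕ (I → E)))
    (hadd : P.add = kiteAdd G l r) (h0 : P.zero = kiteZero E I G)
    (H : Set E) (hH : G.isNormalIdeal H) :
    P.isNormalIdeal {x : (I → E) ⊕ (I → E) | ∃ f : I → E, x = Sum.inl f ∧ ∀ j, f j ∈ H} ∧
    P.isMaximalIdeal {x : (I → E) ⊕ (I → E) | ∃ f : I → E, x = Sum.inl f} :=
  ⟨isNormalIdeal_kitePow hadd h0 hH, isMaximalIdeal_kiteLower hdir hadd h0⟩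

/-- If `H` is a normal ideal of a directed `λ,ρ`-weakly
commutative GPEA `E`, then `H^I` is a normal ideal of the kite `K_I^{λ,ρ}(E)`;
in particular, the lower part `E^I` is a maximal ideal of the kite. -/
theorem kite_normal_ideal {E I : Type} (G : GPEA E) (l r : I ≃ I)
    (hdir : G.directed) (hwc : G.lrWC l r)
    (P : PEA ((I → E) ⊕ (I → E)))
    (hadd : P.add = kiteAdd G l r) (h0 : P.zero = kiteZero E I G)
    (h1 : P.one = kiteOne E I G)
    (H : Set E) (hH : G.isNormalIdeal H) :
    P.isNormalIdeal {x : (I → E) ⊕ (I → E) | ∃ f : I → E, x = Sum.inl f ∧ ∀ j, f j ∈ H} ∧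
    P.isMaximalIdeal {x : (I → E) ⊕ (I → E) | ∃ f : I → E, x = Sum.inl f} :=
  kite_normal_ideal_general G l r hdir P hadd h0 H hH
end
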